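/- arXiv:1609.05422 — 6 statements merged into one kernel-verified Lean document; each statement's English description precedes it below -/
import Mathlib

section
/- Let X be a compact metric space and let f and g be convex, Gateaux differentiable functionals on C⁰(X) whose differentials df_u and dg_u belong to M₁(X) for every u ∈ C⁰(X). Set 𝓕(u) := −f(−u), so that d𝓕_u = df_{−u}. If u₀ ∈ C⁰(X) is a critical point of u ↦ 𝓕(u) − g(u), i.e. d𝓕_{u₀} = dg_{u₀}, then the measure μ₀ := d𝓕_{u₀} minimizes the functional μ ↦ f*(μ) + g*(μ) over M₁(X). -/
/-!
A convex Gateaux differentiable functional lies above its tangent planes, so the supremum defining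
`f*(df_w)` is attained at `u = w`. With `μ₀ = df_{-u₀} = dg_{u₀}` this gives
`f*(μ₀) + g*(μ₀) = -f(-u₀) - g(u₀)`, while for any `μ` testing the two suprema at `-u₀`
and `u₀` gives `f*(μ) + g*(μ) ≥ -f(-u₀) - g(u₀)`, as the pairings with `±u₀` cancel.
-/

open MeasureTheory

theorem ConvexOn.add_le_of_hasDerivAt_line {E : Type*} [AddCommGroup E] [Module ℝ E]
    {f : E → ℝ} (hf : ConvexOn ℝ Set.univ f) {w v : E} {d : ℝ}
    (hd : HasDerivAt (fun t : ℝ => f (w + t • v)) d 0) :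
    f w + d ≤ f (w + v) := by
  have hline : ConvexOn ℝ Set.univ (fun t : ℝ => f (w + t • v)) := by
    simpa [Function.comp_def, AffineMap.lineMap_apply, add_comm]
      using hf.comp_affineMap (AffineMap.lineMap w (w + v))
  have hslope := hline.le_slope_of_hasDerivAt (Set.mem_univ 0) (Set.mem_univ 1) one_pos hd
  simp only [slope_def_field, one_smul, zero_smul, add_zero, sub_zero, div_one] at hslope
  linarith

section LegendreConj

variable {X : Type*} [TopologicalSpace X] [MeasurableSpace X]

/-- The transform `f*` of the paper, evaluated at positive measures only. -/
noncomputable def legendreConj (f : C(X, ℝ) → ℝ) (μ : Measure X) : EReal :=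
  ⨆ u : C(X, ℝ), (((∫ x, u x ∂μ) - f u : ℝ) : EReal)

theorem le_legendreConj (f : C(X, ℝ) → ℝ) (μ : Measure X) (u : C(X, ℝ)) :
    (((∫ x, u x ∂μ) - f u : ℝ) : EReal) ≤ legendreConj f μ :=
  le_iSup (fun u : C(X, ℝ) => (((∫ x, u x ∂μ) - f u : ℝ) : EReal)) u

theorem ContinuousMap.integrable [CompactSpace X] [OpensMeasurableSpace X]
    (μ : Measure X) [IsFiniteMeasure μ] (u : C(X, ℝ)) : Integrable u μ :=
  u.continuous.integrable_of_hasCompactSupport (HasCompactSupport.of_compactSpace _)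

theorem legendreConj_eq_of_hasDerivAt [CompactSpace X] [OpensMeasurableSpace X]
    {f : C(X, ℝ) → ℝ} (hf : ConvexOn ℝ Set.univ f) {w : C(X, ℝ)}
    {μ : Measure X} [IsFiniteMeasure μ]
    (hdf : ∀ v : C(X, ℝ), HasDerivAt (fun t : ℝ => f (w + t • v)) (∫ x, v x ∂μ) 0) :
    legendreConj f μ = (((∫ x, w x ∂μ) - f w : ℝ) : EReal) := by
  refine le_antisymm (iSup_le fun u => ?_) (le_legendreConj f μ w)
  have htangent := hf.add_le_of_hasDerivAt_line (hdf (u - w))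
  have hlin : ∫ x, (u - w) x ∂μ = (∫ x, u x ∂μ) - ∫ x, w x ∂μ :=
    integral_sub (u.integrable μ) (w.integrable μ)
  rw [hlin, add_sub_cancel] at htangent
  exact EReal.coe_le_coe_iff.2 (by linarith)

end LegendreConj

theorem stmt1_general {X : Type*} [MetricSpace X] [CompactSpace X]
    [MeasurableSpace X] [BorelSpace X]
    (f g : C(X, ℝ) → ℝ)
    (hf : ConvexOn ℝ Set.univ f) (hg : ConvexOn ℝ Set.univ g)
    (df dg : C(X, ℝ) → Measure X)
    (hdfP : ∀ u, IsProbabilityMeasure (df u))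
    (hdf : ∀ u v : C(X, ℝ),
      HasDerivAt (fun t : ℝ => f (u + t • v)) (∫ x, v x ∂(df u)) 0)
    (hdg : ∀ u v : C(X, ℝ),
      HasDerivAt (fun t : ℝ => g (u + t • v)) (∫ x, v x ∂(dg u)) 0)
    (u₀ : C(X, ℝ))
    (hcrit : df (-u₀) = dg u₀) :
    ∀ μ : Measure X, IsProbabilityMeasure μ →
      (⨆ u : C(X, ℝ), (((∫ x, u x ∂(df (-u₀))) - f u : ℝ) : EReal))
        + (⨆ u : C(X, ℝ), (((∫ x, u x ∂(df (-u₀))) - g u : ℝ) : EReal))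
      ≤ (⨆ u : C(X, ℝ), (((∫ x, u x ∂μ) - f u : ℝ) : EReal))
        + (⨆ u : C(X, ℝ), (((∫ x, u x ∂μ) - g u : ℝ) : EReal)) := by
  intro μ _
  change legendreConj f (df (-u₀)) + legendreConj g (df (-u₀))
    ≤ legendreConj f μ + legendreConj g μ
  have hneg (ν : Measure X) : ∫ x, (-u₀) x ∂ν = -∫ x, u₀ x ∂ν := integral_neg _
  rw [legendreConj_eq_of_hasDerivAt hf (hdf (-u₀)),
    legendreConj_eq_of_hasDerivAt hg (hcrit ▸ hdg u₀)]
  calc (((∫ x, (-u₀) x ∂(df (-u₀))) - f (-u₀) : ℝ) : EReal)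
        + (((∫ x, u₀ x ∂(df (-u₀))) - g u₀ : ℝ) : EReal)
      = (((∫ x, (-u₀) x ∂μ) - f (-u₀) : ℝ) : EReal)
        + (((∫ x, u₀ x ∂μ) - g u₀ : ℝ) : EReal) := by
        rw [← EReal.coe_add, ← EReal.coe_add, hneg, hneg]; ring_nf
    _ ≤ legendreConj f μ + legendreConj g μ :=
        add_le_add (le_legendreConj f μ (-u₀)) (le_legendreConj g μ u₀)

/-- If `u₀` is a critical point of `u ↦ 𝓕(u) − g(u)` where `𝓕(u) = −f(−u)`
(so that `d𝓕_{u₀} = df_{−u₀}`), then `μ₀ := d𝓕_{u₀}` minimizes `μ ↦ f*(μ) + g*(μ)` over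
the probability measures `M₁(X)`. -/
theorem stmt1 {X : Type*} [MetricSpace X] [CompactSpace X]
    [MeasurableSpace X] [BorelSpace X]
    (f g : C(X, ℝ) → ℝ)
    (hf : ConvexOn ℝ Set.univ f) (hg : ConvexOn ℝ Set.univ g)
    (df dg : C(X, ℝ) → Measure X)
    (hdfP : ∀ u, IsProbabilityMeasure (df u))
    (hdgP : ∀ u, IsProbabilityMeasure (dg u))
    (hdf : ∀ u v : C(X, ℝ),
      HasDerivAt (fun t : ℝ => f (u + t • v)) (∫ x, v x ∂(df u)) 0)
    (hdg : ∀ u v : C(X, ℝ),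
      HasDerivAt (fun t : ℝ => g (u + t • v)) (∫ x, v x ∂(dg u)) 0)
    (u₀ : C(X, ℝ))
    (hcrit : df (-u₀) = dg u₀) :
    ∀ μ : Measure X, IsProbabilityMeasure μ →
      (⨆ u : C(X, ℝ), (((∫ x, u x ∂(df (-u₀))) - f u : ℝ) : EReal))
        + (⨆ u : C(X, ℝ), (((∫ x, u x ∂(df (-u₀))) - g u : ℝ) : EReal))
      ≤ (⨆ u : C(X, ℝ), (((∫ x, u x ∂μ) - f u : ℝ) : EReal))
        + (⨆ u : C(X, ℝ), (((∫ x, u x ∂μ) - g u : ℝ) : EReal)) :=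
  stmt1_general f g hf hg df dg hdfP hdf hdg u₀ hcrit
end

section
/- Let X be a compact metric space and let f : C⁰(X) → ℝ be convex, continuous, and Gateaux differentiable at every point of C⁰(X). Then for every μ ∈ M(X) with f*(μ) < ∞ there exists a sequence (u_j) in C⁰(X) such that the measures μ_j := df_{u_j} converge to μ in the weak-* topology of M(X) and f*(μ_j) → f*(μ). -/
open MeasureTheory Filter

/-- Ekeland's variational principle (continuous version). -/
theorem my_ekeland {E : Type*} [MetricSpace E] [CompleteSpace E]
    (g : E → ℝ) (hg : Continuous g) (B : ℝ) (hB : ∀ x, B ≤ g x)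
    (κ : ℝ) (hκ : 0 < κ) (u : E) :
    ∃ v : E, (g v + κ * dist u v ≤ g u) ∧ ∀ w, g v ≤ g w + κ * dist v w := by
  set F : E → Set E := fun x => {y | g y + κ * dist x y ≤ g x} with hF
  have hself : ∀ x, x ∈ F x := by intro x; simp [hF]
  have hne : ∀ x, (F x).Nonempty := fun x => ⟨x, hself x⟩
  have hbdd : ∀ x, BddBelow (g '' F x) := by
    intro x; exact ⟨B, by rintro a ⟨y, _, rfl⟩; exact hB y⟩
  have htrans : ∀ x y, y ∈ F x → F y ⊆ F x := by
    intro x y hy z hz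
    have h1 : g y + κ * dist x y ≤ g x := hy
    have h2 : g z + κ * dist y z ≤ g y := hz
    have h3 : dist x z ≤ dist x y + dist y z := dist_triangle x y z
    have : κ * dist x z ≤ κ * dist x y + κ * dist y z := by nlinarith
    show g z + κ * dist x z ≤ g x
    linarith
  have hclosed : ∀ x, IsClosed (F x) := by
    intro x
    exact isClosed_le (hg.add (continuous_const.mul (continuous_const.dist continuous_id)))
      continuous_const
  -- choice of next point
  have key : ∀ (x : E) (n : ℕ), ∃ y, y ∈ F x ∧ g y < sInf (g '' F x) + (1/2)^n := by
    intro x n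
    obtain ⟨a, ha, halt⟩ := Real.lt_sInf_add_pos (Set.Nonempty.image g (hne x))
      (show (0:ℝ) < (1/2)^n by positivity)
    obtain ⟨y, hyF, rfl⟩ := ha
    exact ⟨y, hyF, halt⟩
  choose next hnextF hnextlt using key
  set seq : ℕ → E := fun n => Nat.rec u (fun n x => next x n) n with hseq
  have hstep : ∀ n, seq (n+1) ∈ F (seq n) := fun n => hnextF (seq n) n
  have hchain : ∀ n m, n ≤ m → seq m ∈ F (seq n) := by
    intro n m hnm
    induction m with
    | zero => simp_all [Nat.le_zero.mp hnm, hself]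
    | succ m ih =>
      rcases Nat.lt_or_ge n (m+1) with h | h
      · exact htrans _ _ (ih (Nat.lt_succ_iff.mp h)) (hstep m)
      · have : n = m + 1 := le_antisymm hnm h
        subst this; exact hself _
  have hmono : ∀ n m, n ≤ m → g (seq m) ≤ g (seq n) := by
    intro n m hnm
    have h1 : g (seq m) + κ * dist (seq n) (seq m) ≤ g (seq n) := hchain n m hnm
    have hd : 0 ≤ κ * dist (seq n) (seq m) := by positivity
    linarith
  have hdistle : ∀ n m, n ≤ m → dist (seq n) (seq m) ≤ (g (seq n) - g (seq m)) / κ := by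
    intro n m hnm
    have : g (seq m) + κ * dist (seq n) (seq m) ≤ g (seq n) := hchain n m hnm
    rw [le_div_iff₀ hκ]; linarith
  -- convergence of g ∘ seq
  have hanti : Antitone (fun n => g (seq n)) := fun n m h => hmono n m h
  have hbdd2 : BddBelow (Set.range fun n => g (seq n)) := ⟨B, by rintro a ⟨n, rfl⟩; exact hB _⟩
  obtain ⟨L, hL⟩ : ∃ L, Tendsto (fun n => g (seq n)) atTop (nhds L) :=
    ⟨_, tendsto_atTop_ciInf hanti hbdd2⟩
  have hLle : ∀ n, L ≤ g (seq n) := fun n =>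
    le_of_tendsto hL (eventually_atTop.2 ⟨n, fun m hm => hmono n m hm⟩)
  -- Cauchy
  have hcauchy : CauchySeq seq := by
    apply cauchySeq_of_le_tendsto_0 (fun N => (g (seq N) - L) / κ)
    · intro n m N hn hm
      rcases le_total n m with h | h
      · calc dist (seq n) (seq m) ≤ (g (seq n) - g (seq m)) / κ := hdistle n m h
          _ ≤ (g (seq N) - L) / κ := by gcongr; exacts [hmono N n hn, hLle m]
      · calc dist (seq n) (seq m) = dist (seq m) (seq n) := dist_comm _ _
          _ ≤ (g (seq m) - g (seq n)) / κ := hdistle m n h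
          _ ≤ (g (seq N) - L) / κ := by gcongr; exacts [hmono N m hm, hLle n]
    · have : Tendsto (fun N => (g (seq N) - L) / κ) atTop (nhds ((L - L)/κ)) :=
        (hL.sub tendsto_const_nhds).div_const κ
      simpa using this
  obtain ⟨v, hv⟩ := cauchySeq_tendsto_of_complete hcauchy
  have hgv : g v = L := tendsto_nhds_unique ((hg.tendsto v).comp hv) hL
  have hvF : ∀ n, v ∈ F (seq n) := by
    intro n
    apply (hclosed (seq n)).mem_of_tendsto hv
    exact eventually_atTop.2 ⟨n, fun m hm => hchain n m hm⟩
  refine ⟨v, hvF 0, ?_⟩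
  intro w
  by_contra hcon
  push_neg at hcon
  -- hcon : g w + κ * dist v w < g v
  have hwFv : w ∈ F v := le_of_lt hcon
  have hgwge : g v ≤ g w := by
    have h1 : ∀ n : ℕ, g v ≤ g w + (1/2)^n := by
      intro n
      have hwFn : w ∈ F (seq n) := htrans _ _ (hvF n) hwFv
      have h2 : sInf (g '' F (seq n)) ≤ g w := csInf_le (hbdd _) ⟨w, hwFn, rfl⟩
      have h3 : g (seq (n+1)) < sInf (g '' F (seq n)) + (1/2)^n := hnextlt (seq n) n
      have h4 : L ≤ g (seq (n+1)) := hLle (n+1)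
      rw [hgv]; linarith
    have h5 : Tendsto (fun n : ℕ => g w + (1/2)^n) atTop (nhds (g w + 0)) :=
      tendsto_const_nhds.add (tendsto_pow_atTop_nhds_zero_of_lt_one (by norm_num) (by norm_num))
    have := ge_of_tendsto h5 (Eventually.of_forall h1)
    linarith
  have : 0 ≤ κ * dist v w := by positivity
  linarith

section Helpers
variable {E : Type*} [NormedAddCommGroup E] [NormedSpace ℝ E]

/-- One-sided derivative bound from an Ekeland-type inequality. -/
theorem deriv_lb (f : E → ℝ) (μ : E →L[ℝ] ℝ) (D : E →L[ℝ] ℝ) (v : E)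
    (hdf : ∀ h : E, HasDerivAt (fun t : ℝ => f (v + t • h)) (D h) 0)
    (κ : ℝ) (hκ : 0 ≤ κ) (hek : ∀ w, f v - μ v ≤ f w - μ w + κ * dist v w)
    (h : E) : |D h - μ h| ≤ κ * ‖h‖ := by
  have one : ∀ h : E, μ h - κ * ‖h‖ ≤ D h := by
    intro h
    have hs := hasDerivAt_iff_tendsto_slope.mp (hdf h)
    have hs' : Tendsto (slope (fun t : ℝ => f (v + t • h)) 0) (nhdsWithin 0 (Set.Ioi 0))
        (nhds (D h)) := hs.mono_left (nhdsWithin_mono 0 (fun t ht => ne_of_gt ht))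
    apply ge_of_tendsto hs'
    filter_upwards [self_mem_nhdsWithin] with t (ht : 0 < t)
    have hineq := hek (v + t • h)
    have hμ : μ (v + t • h) = μ v + t * μ h := by
      simp [map_add, _root_.map_smul]
    have hdist : dist v (v + t • h) = t * ‖h‖ := by
      rw [dist_eq_norm]
      simp [norm_smul, abs_of_pos ht]
    rw [hμ, hdist] at hineq
    have hslope : slope (fun t : ℝ => f (v + t • h)) 0 t = (f (v + t • h) - f v) / t := by
      simp [slope_def_field]
    rw [hslope, le_div_iff₀ ht]
    nlinarith
  have h1 := one h
  have h2 := one (-h)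
  rw [map_neg, map_neg, norm_neg] at h2
  rw [abs_le]
  constructor <;> linarith

/-- Gradient inequality for convex functions. -/
theorem grad_ineq (f : E → ℝ) (hconv : ConvexOn ℝ Set.univ f) (D : E →L[ℝ] ℝ) (v : E)
    (hdf : ∀ h : E, HasDerivAt (fun t : ℝ => f (v + t • h)) (D h) 0)
    (w : E) : D (w - v) ≤ f w - f v := by
  have hs := hasDerivAt_iff_tendsto_slope.mp (hdf (w - v))
  have hs' : Tendsto (slope (fun t : ℝ => f (v + t • (w - v))) 0) (nhdsWithin 0 (Set.Ioi 0))
      (nhds (D (w - v))) := hs.mono_left (nhdsWithin_mono 0 (fun t ht => ne_of_gt ht))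
  apply le_of_tendsto hs'
  filter_upwards [Ioo_mem_nhdsGT_of_mem (Set.mem_Ico.mpr ⟨le_refl (0:ℝ), one_pos⟩)]
    with t ht
  obtain ⟨ht0, ht1⟩ := ht
  have hcvx := hconv.2 (Set.mem_univ v) (Set.mem_univ w)
    (show (0:ℝ) ≤ 1 - t by linarith) ht0.le (by ring)
  have heq : (1 - t) • v + t • w = v + t • (w - v) := by
    module
  rw [heq] at hcvx
  have hslope : slope (fun t : ℝ => f (v + t • (w - v))) 0 t
      = (f (v + t • (w - v)) - f v) / t := by
    simp [slope_def_field]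
  simp only [smul_eq_mul] at hcvx
  rw [hslope, div_le_iff₀ ht0]
  nlinarith

/-- Squeeze tendsto. -/
theorem tendsto_of_abs_sub_le {a : ℕ → ℝ} {L C : ℝ} (h : ∀ j, |a j - L| ≤ C / (j+1)) :
    Tendsto a atTop (nhds L) := by
  have h0 : Tendsto (fun j : ℕ => a j - L) atTop (nhds 0) := by
    apply squeeze_zero_norm (fun j => h j)
    have := tendsto_one_div_add_atTop_nhds_zero_nat.const_mul C
    simpa [div_eq_mul_inv, mul_comm] using this
  have := h0.add_const L
  simpa using this

end Helpers

/-- (Brøndsted–Rockafellar type density.) Let `f` be a convex, continuous,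
everywhere Gateaux differentiable functional on `C⁰(X)`, with differentials `df_u ∈ M(X)`
(signed measures, identified with continuous linear functionals on `C⁰(X)`). Then every
`μ ∈ M(X)` with `f*(μ) < ∞` is the weak-* limit of a sequence `μ_j := df_{u_j}` with
`f*(μ_j) → f*(μ)`. -/
theorem stmt2 {X : Type*} [MetricSpace X] [CompactSpace X]
    (f : C(X, ℝ) → ℝ)
    (hconv : ConvexOn ℝ Set.univ f) (hcont : Continuous f)
    (df : C(X, ℝ) → (C(X, ℝ) →L[ℝ] ℝ))
    (hdf : ∀ u v : C(X, ℝ), HasDerivAt (fun t : ℝ => f (u + t • v)) (df u v) 0)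
    (μ : C(X, ℝ) →L[ℝ] ℝ)
    (hμ : (⨆ u : C(X, ℝ), ((μ u - f u : ℝ) : EReal)) < ⊤) :
    ∃ U : ℕ → C(X, ℝ),
      (∀ v : C(X, ℝ), Tendsto (fun j => df (U j) v) atTop (nhds (μ v))) ∧
      Tendsto (fun j => ⨆ u : C(X, ℝ), ((df (U j) u - f u : ℝ) : EReal)) atTop
        (nhds (⨆ u : C(X, ℝ), ((μ u - f u : ℝ) : EReal))) := by
  classical
  set Sup : EReal := ⨆ u : C(X, ℝ), ((μ u - f u : ℝ) : EReal) with hSup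
  have hbot : ((μ 0 - f 0 : ℝ) : EReal) ≤ Sup := le_iSup (fun u : C(X,ℝ) => ((μ u - f u : ℝ) : EReal)) 0
  have hne : Sup ≠ ⊥ := by
    intro h
    rw [h, le_bot_iff] at hbot
    exact EReal.coe_ne_bot _ hbot
  set S : ℝ := Sup.toReal with hSdef
  have hScoe : (S : EReal) = Sup := EReal.coe_toReal (ne_of_lt hμ) hne
  have hub : ∀ u, μ u - f u ≤ S := by
    intro u
    have h := le_iSup (fun u : C(X,ℝ) => ((μ u - f u : ℝ) : EReal)) u
    rw [← hSup, ← hScoe] at h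
    exact_mod_cast h
  have happrox : ∀ j : ℕ, ∃ u, S - 1/((j:ℝ)+1) < μ u - f u := by
    intro j
    have h1 : ((S - 1/((j:ℝ)+1) : ℝ) : EReal) < Sup := by
      rw [← hScoe]
      exact_mod_cast sub_lt_self S (by positivity)
    rw [hSup] at h1
    obtain ⟨u, hu⟩ := lt_iSup_iff.mp h1
    exact ⟨u, by exact_mod_cast hu⟩
  choose u₀ hu₀ using happrox
  set κ : ℕ → ℝ := fun j => 1/(((j:ℝ)+1)^2 * (1 + ‖u₀ j‖)) with hκ
  have hκpos : ∀ j, 0 < κ j := by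
    intro j
    have : (0:ℝ) ≤ ‖u₀ j‖ := norm_nonneg _
    positivity
  have hEk : ∀ j : ℕ, ∃ v : C(X,ℝ),
      ((f v - μ v) + κ j * dist (u₀ j) v ≤ f (u₀ j) - μ (u₀ j)) ∧
      ∀ w, f v - μ v ≤ f w - μ w + κ j * dist v w := by
    intro j
    exact my_ekeland (fun w => f w - μ w) (hcont.sub μ.continuous) (-S)
      (fun x => show -S ≤ f x - μ x by have := hub x; linarith) (κ j) (hκpos j) (u₀ j)
  choose V hV1 hV2 using hEk
  -- derivative bound
  have hDb : ∀ j (h : C(X,ℝ)), |df (V j) h - μ h| ≤ κ j * ‖h‖ := by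
    intro j h
    exact deriv_lb f μ (df (V j)) (V j) (hdf (V j)) (κ j) (hκpos j).le (hV2 j) h
  have hκle : ∀ j, κ j ≤ 1/((j:ℝ)+1) := by
    intro j
    rw [hκ]
    apply one_div_le_one_div_of_le (by positivity)
    have h1 : (0:ℝ) ≤ ‖u₀ j‖ := norm_nonneg _
    have h2 : (1:ℝ) ≤ (j:ℝ)+1 := by
      have : (0:ℝ) ≤ (j:ℝ) := Nat.cast_nonneg j
      linarith
    nlinarith
  refine ⟨V, ?_, ?_⟩
  · -- weak-* convergence
    intro h
    apply tendsto_of_abs_sub_le (C := ‖h‖)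
    intro j
    calc |df (V j) h - μ h| ≤ κ j * ‖h‖ := hDb j h
      _ ≤ (1/((j:ℝ)+1)) * ‖h‖ := by
          apply mul_le_mul_of_nonneg_right (hκle j) (norm_nonneg _)
      _ = ‖h‖ / ((j:ℝ)+1) := by ring
  · -- convergence of the conjugates
    set T : ℕ → ℝ := fun j => df (V j) (V j) - f (V j) with hT
    -- per-j quantitative bounds
    have hTb : ∀ j, |T j - S| ≤ 3/((j:ℝ)+1) := by
      intro j
      have hgV : -S ≤ f (V j) - μ (V j) := by have := hub (V j); linarith
      have hd0 : 0 ≤ κ j * dist (u₀ j) (V j) := by positivity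
      have hgu : f (u₀ j) - μ (u₀ j) < -S + 1/((j:ℝ)+1) := by have := hu₀ j; linarith
      have hA1 := hV1 j
      -- g V ≤ g u₀ < -S + 1/(j+1)
      have hgVle : f (V j) - μ (V j) < -S + 1/((j:ℝ)+1) := by linarith
      -- κ d ≤ 1/(j+1)
      have hκd : κ j * dist (u₀ j) (V j) ≤ 1/((j:ℝ)+1) := by linarith
      -- ‖V j‖ ≤ ‖u₀ j‖ + dist
      have hnV : ‖V j‖ ≤ ‖u₀ j‖ + dist (u₀ j) (V j) := by
        have h1 : V j = u₀ j - (u₀ j - V j) := by abel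
        calc ‖V j‖ = ‖u₀ j - (u₀ j - V j)‖ := by rw [← h1]
          _ ≤ ‖u₀ j‖ + ‖u₀ j - V j‖ := norm_sub_le _ _
          _ = ‖u₀ j‖ + dist (u₀ j) (V j) := by rw [dist_eq_norm]
      have hκu : κ j * (1 + ‖u₀ j‖) = 1/(((j:ℝ)+1)^2) := by
        rw [hκ]
        have h1 : (0:ℝ) < 1 + ‖u₀ j‖ := by have := norm_nonneg (u₀ j); linarith
        field_simp
      have hj2 : 1/(((j:ℝ)+1)^2) ≤ 1/((j:ℝ)+1) := by
        apply one_div_le_one_div_of_le (by positivity)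
        have : (1:ℝ) ≤ (j:ℝ)+1 := by have : (0:ℝ) ≤ (j:ℝ) := Nat.cast_nonneg j; linarith
        nlinarith
      have hκV : κ j * ‖V j‖ ≤ 2/((j:ℝ)+1) := by
        have h1 : κ j * ‖V j‖ ≤ κ j * (‖u₀ j‖ + dist (u₀ j) (V j)) :=
          mul_le_mul_of_nonneg_left hnV (hκpos j).le
        have h2 : κ j * ‖u₀ j‖ ≤ κ j * (1 + ‖u₀ j‖) := by
          apply mul_le_mul_of_nonneg_left _ (hκpos j).le
          linarith
        have h3 : κ j * (‖u₀ j‖ + dist (u₀ j) (V j))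
            = κ j * ‖u₀ j‖ + κ j * dist (u₀ j) (V j) := by ring
        rw [hκu] at h2
        have h4 : κ j * ‖u₀ j‖ ≤ 1/((j:ℝ)+1) := le_trans h2 hj2
        have e0 : (2:ℝ)/((j:ℝ)+1) = 1/((j:ℝ)+1) + 1/((j:ℝ)+1) := by ring
        linarith
      have hfirst : |df (V j) (V j) - μ (V j)| ≤ 2/((j:ℝ)+1) :=
        le_trans (hDb j (V j)) hκV
      have h5 := hub (V j)
      have e1 : (3:ℝ)/((j:ℝ)+1) = 2/((j:ℝ)+1) + 1/((j:ℝ)+1) := by ring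
      rw [abs_le] at hfirst ⊢
      simp only [hT]
      exact ⟨by linarith [hfirst.1], by linarith [hfirst.2]⟩
    -- sup attained at V j
    have hsupeq : ∀ j, (⨆ u : C(X,ℝ), ((df (V j) u - f u : ℝ) : EReal)) = ((T j : ℝ) : EReal) := by
      intro j
      apply le_antisymm
      · apply iSup_le
        intro u
        have hg := grad_ineq f hconv (df (V j)) (V j) (hdf (V j)) u
        rw [map_sub] at hg
        have : df (V j) u - f u ≤ T j := by simp only [hT]; linarith
        exact_mod_cast this
      · exact le_iSup (fun u : C(X,ℝ) => ((df (V j) u - f u : ℝ) : EReal)) (V j)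
    have hfun : (fun j => ⨆ u : C(X,ℝ), ((df (V j) u - f u : ℝ) : EReal))
        = fun j => ((T j : ℝ) : EReal) := funext hsupeq
    rw [hfun, ← hScoe]
    exact EReal.tendsto_coe.mpr (tendsto_of_abs_sub_le hTb)
end

section
/- Let X be a compact metric space and for each N let H^{(N)} : X^N → ℝ be a symmetric lower semicontinuous function. Fix u_* ∈ C⁰(X) and, for each N, let x_*^{(N)} ∈ X^N be a minimizer on X^N of the function (x₁,…,x_N) ↦ H^{(N)}(x₁,…,x_N) + u_*(x₁) + ⋯ + u_*(x_N). Assume that for every u ∈ C⁰(X) the limit 𝓕(u) := lim_{N→∞} (1/N) inf_{X^N} ( H^{(N)} + u(x₁) + ⋯ + u(x_N) ) exists in ℝ, and that 𝓕 is Gateaux differentiable at u_* with differential d𝓕_{u_*} ∈ M(X). Then the empirical measures δ_N(x_*^{(N)}) converge to d𝓕_{u_*} in the weak-* topology of M(X). -/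
/-!
The infimum of the perturbed energy `H + Σᵢ (u_* + t v)(xᵢ)` is at most its value at the
minimizer `x_*^{(N)}` of the unperturbed one, so the normalized infima `g_N(t)` satisfy
`g_N(t) ≤ g_N(0) + t ⟨v, δ_N(x_*^{(N)})⟩` for every `t`. Hence for `t > 0` (resp. `t < 0`) the
difference quotient `(g_N(t) - g_N(0)) / t` bounds `⟨v, δ_N⟩` from below (resp. above); letting
`N → ∞` and then `t → 0`, both bounds tend to the derivative of `t ↦ 𝓕(u_* + t v)` at `0`.
Compactness of `X` is needed only to keep the perturbation bounded, so that the infima are not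
the junk value of `sInf` on a set unbounded below.
-/

open Filter Topology Set

theorem eventually_lt_of_hasDerivWithinAt_Ioi_of_le_add_mul {g : ℕ → ℝ → ℝ} {G : ℝ → ℝ}
    {s : ℕ → ℝ} {d a : ℝ} (hlim : ∀ t, Tendsto (fun N => g N t) atTop (𝓝 (G t)))
    (hG : HasDerivWithinAt G d (Ioi 0) 0) (hle : ∀ N t, g N t ≤ g N 0 + t * s N)
    (had : a < d) : ∀ᶠ N in atTop, a < s N := by
  have hslope := (hasDerivWithinAt_iff_tendsto_slope' self_notMem_Ioi).mp hG
  obtain ⟨t, hat, ht⟩ := ((hslope.eventually (eventually_gt_nhds had)).and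
    self_mem_nhdsWithin).exists
  rw [slope_def_field, sub_zero] at hat
  have hquot : Tendsto (fun N => (g N t - g N 0) / t) atTop (𝓝 ((G t - G 0) / t)) :=
    ((hlim t).sub (hlim 0)).div_const t
  filter_upwards [hquot.eventually (eventually_gt_nhds hat)] with N hN
  calc a < (g N t - g N 0) / t := hN
    _ ≤ s N := by rw [div_le_iff₀ ht]; linarith [hle N t]

theorem tendsto_of_hasDerivAt_of_le_add_mul {g : ℕ → ℝ → ℝ} {G : ℝ → ℝ} {s : ℕ → ℝ} {d : ℝ}
    (hlim : ∀ t, Tendsto (fun N => g N t) atTop (𝓝 (G t))) (hG : HasDerivAt G d 0)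
    (hle : ∀ N t, g N t ≤ g N 0 + t * s N) : Tendsto s atTop (𝓝 d) := by
  have hG' : HasDerivAt (fun t => G (-t)) (-d) 0 := by
    simpa [Function.comp_def] using hG.comp_of_eq 0 (hasDerivAt_neg 0) neg_zero.symm
  refine tendsto_order.2 ⟨fun a had => ?_, fun b hdb => ?_⟩
  · exact eventually_lt_of_hasDerivWithinAt_Ioi_of_le_add_mul hlim hG.hasDerivWithinAt hle had
  · have := eventually_lt_of_hasDerivWithinAt_Ioi_of_le_add_mul (g := fun N t => g N (-t))
      (s := fun N => -s N) (fun t => hlim (-t)) hG'.hasDerivWithinAt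
      (fun N t => by simpa using hle N (-t)) (neg_lt_neg hdb)
    simpa using this

theorem csInf_range_add_le_of_forall_le {ι : Type*} {f g : ι → ℝ} {x : ι}
    (hx : ∀ y, f x ≤ f y) (hg : BddBelow (range g)) :
    sInf (range fun y => f y + g y) ≤ sInf (range f) + g x := by
  obtain ⟨m, hm⟩ := hg
  have hbdd : BddBelow (range fun y => f y + g y) :=
    ⟨f x + m, by rintro _ ⟨y, rfl⟩; exact add_le_add (hx y) (hm ⟨y, rfl⟩)⟩
  have hleast : IsLeast (range f) (f x) := ⟨⟨x, rfl⟩, by rintro _ ⟨y, rfl⟩; exact hx y⟩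
  rw [hleast.csInf_eq]
  exact csInf_le hbdd ⟨x, rfl⟩

section ScaledInfEnergy

variable {X : Type*} [TopologicalSpace X]

noncomputable def scaledInfEnergy (H : (N : ℕ) → (Fin N → X) → ℝ) (N : ℕ) (u : C(X, ℝ)) : ℝ :=
  sInf (range fun y : Fin N → X => H N y + ∑ i, u (y i)) / N

theorem scaledInfEnergy_add_smul_le [CompactSpace X] {H : (N : ℕ) → (Fin N → X) → ℝ}
    {u : C(X, ℝ)} {N : ℕ} {x : Fin N → X}
    (hx : ∀ y, H N x + ∑ i, u (x i) ≤ H N y + ∑ i, u (y i)) (v : C(X, ℝ)) (t : ℝ) :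
    scaledInfEnergy H N (u + t • v) ≤ scaledInfEnergy H N u + t * ((∑ i, v (x i)) / N) := by
  have hsum : ∀ y : Fin N → X, ∑ i, (u + t • v) (y i) = ∑ i, u (y i) + t * ∑ i, v (y i) := by
    simp [Finset.sum_add_distrib, Finset.mul_sum]
  have hbdd : BddBelow (range fun y : Fin N → X => t * ∑ i, v (y i)) :=
    (isCompact_range (by fun_prop)).bddBelow
  have hinf := csInf_range_add_le_of_forall_le (f := fun y => H N y + ∑ i, u (y i)) hx hbdd
  simp only [add_assoc, ← hsum] at hinf
  rw [scaledInfEnergy, scaledInfEnergy, mul_div_assoc', ← add_div]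
  exact div_le_div_of_nonneg_right hinf N.cast_nonneg

end ScaledInfEnergy

theorem stmt3_general {X : Type*} [MetricSpace X] [CompactSpace X]
    (H : (N : ℕ) → (Fin N → X) → ℝ)
    (ustar : C(X, ℝ))
    (xstar : (N : ℕ) → (Fin N → X))
    (hmin : ∀ (N : ℕ) (y : Fin N → X),
      H N (xstar N) + ∑ i : Fin N, ustar (xstar N i) ≤ H N y + ∑ i : Fin N, ustar (y i))
    (F : C(X, ℝ) → ℝ)
    (hF : ∀ u : C(X, ℝ),
      Tendsto (fun N : ℕ =>
          (sInf (Set.range fun y : Fin N → X => H N y + ∑ i : Fin N, u (y i))) / N)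
        atTop (nhds (F u)))
    (L : C(X, ℝ) →L[ℝ] ℝ)
    (hGat : ∀ v : C(X, ℝ), HasDerivAt (fun t : ℝ => F (ustar + t • v)) (L v) 0) :
    ∀ v : C(X, ℝ),
      Tendsto (fun N : ℕ => (∑ i : Fin N, v (xstar N i)) / N) atTop (nhds (L v)) := by
  intro v
  refine tendsto_of_hasDerivAt_of_le_add_mul (g := fun N t => scaledInfEnergy H N (ustar + t • v))
    (fun t => hF (ustar + t • v)) (hGat v) fun N t => ?_
  simpa using scaledInfEnergy_add_smul_le (hmin N) v t

/-- Convergence of minimizers ("abstract Fekete points"): if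
`x_*^{(N)}` minimizes `H^{(N)} + u_*(x₁) + ⋯ + u_*(x_N)` on `X^N`, the limits
`𝓕(u) := lim_N (1/N) inf_{X^N} (H^{(N)} + Σᵢ u(xᵢ))` exist, and `𝓕` is Gateaux
differentiable at `u_*` with differential `L ∈ M(X)`, then the empirical measures
`δ_N(x_*^{(N)})` converge weak-* to `L`. -/
theorem stmt3 {X : Type*} [MetricSpace X] [CompactSpace X]
    (H : (N : ℕ) → (Fin N → X) → ℝ)
    (hsym : ∀ (N : ℕ) (σ : Equiv.Perm (Fin N)) (x : Fin N → X), H N (x ∘ σ) = H N x)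
    (hlsc : ∀ N, LowerSemicontinuous (H N))
    (ustar : C(X, ℝ))
    (xstar : (N : ℕ) → (Fin N → X))
    (hmin : ∀ (N : ℕ) (y : Fin N → X),
      H N (xstar N) + ∑ i : Fin N, ustar (xstar N i) ≤ H N y + ∑ i : Fin N, ustar (y i))
    (F : C(X, ℝ) → ℝ)
    (hF : ∀ u : C(X, ℝ),
      Tendsto (fun N : ℕ =>
          (sInf (Set.range fun y : Fin N → X => H N y + ∑ i : Fin N, u (y i))) / N)
        atTop (nhds (F u)))
    (L : C(X, ℝ) →L[ℝ] ℝ)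
    (hGat : ∀ v : C(X, ℝ), HasDerivAt (fun t : ℝ => F (ustar + t • v)) (L v) 0) :
    ∀ v : C(X, ℝ),
      Tendsto (fun N : ℕ => (∑ i : Fin N, v (xstar N i)) / N) atTop (nhds (L v)) :=
  stmt3_general H ustar xstar hmin F hF L hGat
end

section
/- Let X be a compact metric space. For each N let E_N : M₁(X) → (−∞,∞] be lower semicontinuous for the weak-* topology and not identically +∞, and define E_N*(u) := sup_{μ ∈ M₁(X)} ( ⟨u,μ⟩ − E_N(μ) ) for u ∈ C⁰(X). Assume that for every u ∈ C⁰(X) the limit f(u) := lim_{N→∞} E_N*(u) exists in ℝ, and that f is convex, continuous, and Gateaux differentiable on C⁰(X). Then E_N Γ-converges, on M₁(X) equipped with the weak-* topology, to the restriction to M₁(X) of the Legendre–Fenchel transform f*. -/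
open MeasureTheory Filter BoundedContinuousFunction


set_option linter.unusedSectionVars false
set_option maxHeartbeats 1600000
set_option linter.unusedVariables false


section helpers

variable {X : Type*} [MetricSpace X] [CompactSpace X] [MeasurableSpace X] [BorelSpace X]

/-- pairing of a continuous function with a probability measure -/
noncomputable def pairR (u : C(X, ℝ)) (μ : ProbabilityMeasure X) : ℝ :=
  ∫ x, u x ∂(μ : Measure X)

lemma abs_pairR_le (u : C(X, ℝ)) (μ : ProbabilityMeasure X) : |pairR u μ| ≤ ‖u‖ := by
  rw [← Real.norm_eq_abs, pairR]
  calc ‖∫ x, u x ∂(μ : Measure X)‖ ≤ ‖u‖ * ((μ : Measure X) Set.univ).toReal := by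
        apply norm_integral_le_of_norm_le_const
        exact Filter.Eventually.of_forall (fun x => u.norm_coe_le_norm x)
    _ = ‖u‖ := by simp

lemma pairR_add_smul (u w : C(X, ℝ)) (t : ℝ) (μ : ProbabilityMeasure X) :
    pairR (u + t • w) μ = pairR u μ + t * pairR w μ := by
  simp only [pairR, ContinuousMap.add_apply, ContinuousMap.smul_apply, smul_eq_mul]
  rw [integral_add, integral_const_mul]
  · exact (BoundedContinuousFunction.integrable _ (mkOfCompact u))
  · exact (Integrable.const_mul (BoundedContinuousFunction.integrable _ (mkOfCompact w)) t)

lemma tendsto_pairR {ι : Type*} {l : Filter ι} {μs : ι → ProbabilityMeasure X}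
    {μ : ProbabilityMeasure X} (h : Tendsto μs l (nhds μ)) (u : C(X, ℝ)) :
    Tendsto (fun i => pairR u (μs i)) l (nhds (pairR u μ)) := by
  have := ProbabilityMeasure.tendsto_iff_forall_integral_tendsto.mp h (mkOfCompact u)
  simpa [pairR] using this

lemma abs_pairR_sub_le (u w : C(X, ℝ)) (μ : ProbabilityMeasure X) :
    |pairR u μ - pairR w μ| ≤ dist u w := by
  have h1 : pairR u μ - pairR w μ = pairR (u - w) μ := by
    have : u - w = u + (-1 : ℝ) • w := by ring_nf; module
    rw [this, pairR_add_smul]; ring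
  rw [h1]
  calc |pairR (u - w) μ| ≤ ‖u - w‖ := abs_pairR_le _ _
    _ = dist u w := by rw [dist_eq_norm]

end helpers

section parts

variable {X : Type*} [MetricSpace X] [CompactSpace X] [MeasurableSpace X] [BorelSpace X]
  (E : ℕ → ProbabilityMeasure X → EReal) (f : C(X, ℝ) → ℝ)

/-- The Γ-liminf inequality. -/
lemma part1
    (hbot : ∀ N μ, E N μ ≠ ⊥)
    (hlim : ∀ u : C(X, ℝ),
      Tendsto (fun N => ⨆ μ : ProbabilityMeasure X, (((pairR u μ : ℝ) : EReal) - E N μ)) atTop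
        (nhds ((f u : ℝ) : EReal)))
    (μ : ProbabilityMeasure X) (μs : ℕ → ProbabilityMeasure X)
    (hμs : Tendsto μs atTop (nhds μ)) :
    (⨆ u : C(X, ℝ), ((pairR u μ - f u : ℝ) : EReal)) ≤ liminf (fun N => E N (μs N)) atTop := by
  apply iSup_le
  intro u
  set S : ℕ → EReal := fun N => ⨆ ν : ProbabilityMeasure X, (((pairR u ν : ℝ) : EReal) - E N ν)
    with hSdef
  have hS : Tendsto S atTop (nhds ((f u : ℝ) : EReal)) := hlim u
  -- key pointwise inequality
  have h1 : ∀ N, ((pairR u (μs N) : ℝ) : EReal) - S N ≤ E N (μs N) := by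
    intro N
    have hle : ((pairR u (μs N) : ℝ) : EReal) - E N (μs N) ≤ S N :=
      le_iSup (fun ν => (((pairR u ν : ℝ) : EReal) - E N ν)) (μs N)
    rcases eq_or_ne (E N (μs N)) ⊤ with hE | hE
    · rw [hE]; exact le_top
    · have hEb := hbot N (μs N)
      set e := (E N (μs N)).toReal with he
      have hEe : E N (μs N) = (e : EReal) := (EReal.coe_toReal hE hEb).symm
      rw [hEe] at hle ⊢
      rcases eq_or_ne (S N) ⊤ with hT | hT
      · rw [hT, EReal.sub_top]; exact bot_le
      · have hSb : S N ≠ ⊥ := by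
          intro hb
          rw [hb] at hle
          simp only [le_bot_iff] at hle
          rw [← EReal.coe_sub] at hle
          exact (EReal.coe_ne_bot _) hle
        set s := (S N).toReal with hs
        have hSs : S N = (s : EReal) := (EReal.coe_toReal hT hSb).symm
        rw [hSs] at hle ⊢
        rw [← EReal.coe_sub] at hle ⊢
        rw [EReal.coe_le_coe_iff] at hle ⊢
        linarith
  -- convergence of the lower bound
  have h2 : Tendsto (fun N => ((pairR u (μs N) : ℝ) : EReal) - S N) atTop
      (nhds ((pairR u μ - f u : ℝ) : EReal)) := by
    have hev : ∀ᶠ N in atTop, ((pairR u (μs N) : ℝ) : EReal) - S N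
        = (((pairR u (μs N) - (S N).toReal : ℝ)) : EReal) := by
      filter_upwards [hS.eventually_lt_const (show ((f u : ℝ) : EReal) < ⊤ from EReal.coe_lt_top _),
        hS.eventually_const_lt (show (⊥ : EReal) < ((f u : ℝ) : EReal) from EReal.bot_lt_coe _)]
        with N hN1 hN2
      rw [EReal.coe_sub]
      congr 1
      exact (EReal.coe_toReal hN1.ne hN2.ne').symm
    rw [tendsto_congr' hev]
    have hsr : Tendsto (fun N => (S N).toReal) atTop (nhds (f u)) := by
      have := (EReal.tendsto_toReal (EReal.coe_ne_top (f u)) (EReal.coe_ne_bot (f u))).comp hS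
      simpa [Function.comp_def] using this
    have hr : Tendsto (fun N => pairR u (μs N) - (S N).toReal) atTop (nhds (pairR u μ - f u)) :=
      ((tendsto_pairR hμs u).sub hsr)
    exact (continuous_coe_real_ereal.tendsto _).comp hr
  calc ((pairR u μ - f u : ℝ) : EReal) = liminf (fun N => ((pairR u (μs N) : ℝ) : EReal) - S N) atTop :=
        (h2.liminf_eq).symm
    _ ≤ liminf (fun N => E N (μs N)) atTop := liminf_le_liminf (Eventually.of_forall h1)



/-- Ekeland variational principle -/
theorem my_ekeland_s5 {Y : Type*} [MetricSpace Y] [CompleteSpace Y]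
    (g : Y → ℝ) (hg : Continuous g) (u₀ : Y) {ε lam : ℝ} (hε : 0 < ε) (hlam : 0 < lam)
    (hbelow : ∀ v, g u₀ - ε ≤ g v) :
    ∃ u : Y, g u ≤ g u₀ ∧ dist u u₀ ≤ lam ∧ ∀ v, g u - (ε / lam) * dist v u ≤ g v := by
  set σ := ε / lam with hσdef
  have hσ : 0 < σ := div_pos hε hlam
  set S : Y → Set Y := fun x => {y | g y + σ * dist y x ≤ g x} with hS
  have hmem : ∀ x, x ∈ S x := by intro x; simp [hS]
  have hSne : ∀ x, (Set.image g (S x)).Nonempty := fun x => ⟨g x, x, hmem x, rfl⟩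
  have hSbdd : ∀ x, BddBelow (Set.image g (S x)) := by
    intro x
    refine ⟨g u₀ - ε, ?_⟩
    rintro r ⟨y, -, rfl⟩
    exact hbelow y
  have key : ∀ x : Y, ∀ n : ℕ, ∃ y ∈ S x, g y ≤ sInf (Set.image g (S x)) + (1/2)^n := by
    intro x n
    obtain ⟨r, hr, hrlt⟩ := Real.lt_sInf_add_pos (hSne x) (by positivity : (0:ℝ) < (1/2)^n)
    obtain ⟨y, hy, rfl⟩ := hr
    exact ⟨y, hy, hrlt.le⟩
  choose next hnext₁ hnext₂ using key
  set x : ℕ → Y := fun n => Nat.rec u₀ (fun n xn => next xn n) n with hx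
  have hx0 : x 0 = u₀ := rfl
  have hxsucc : ∀ n, x (n+1) = next (x n) n := fun n => rfl
  have hstep : ∀ n, x (n+1) ∈ S (x n) := fun n => by rw [hxsucc]; exact hnext₁ (x n) n
  have hmono : ∀ n, g (x (n+1)) + σ * dist (x (n+1)) (x n) ≤ g (x n) := fun n => hstep n
  have hgmono : ∀ n, g (x (n+1)) ≤ g (x n) := by
    intro n
    have := hmono n
    nlinarith [dist_nonneg (x := x (n+1)) (y := x n), hσ]
  have hganti : Antitone fun n => g (x n) := antitone_nat_of_succ_le hgmono
  have hdist : ∀ n, dist (x (n+1)) (x n) ≤ (g (x n) - g (x (n+1))) / σ := by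
    intro n
    rw [le_div_iff₀ hσ]
    nlinarith [hmono n]
  have hsum : ∀ n, ∑ i ∈ Finset.range n, dist (x (i+1)) (x i) ≤ (g u₀ - g (x n)) / σ := by
    intro n
    induction n with
    | zero => simp [hx0]
    | succ n ih =>
      rw [Finset.sum_range_succ]
      have h1 := hdist n
      have h2 : (g u₀ - g (x n)) / σ + (g (x n) - g (x (n+1))) / σ = (g u₀ - g (x (n+1))) / σ := by
        ring
      linarith
  have hsum' : ∀ n, ∑ i ∈ Finset.range n, dist (x (i+1)) (x i) ≤ lam := by
    intro n
    refine (hsum n).trans ?_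
    have h := hbelow (x n)
    rw [div_le_iff₀ hσ, hσdef]
    field_simp
    linarith
  -- Cauchy
  have hsummable : Summable (fun n => dist (x (n+1)) (x n)) := by
    apply summable_of_sum_range_le (fun n => dist_nonneg) hsum'
  have hdistsymm : Summable (fun n => dist (x n) (x (n+1))) := by
    simpa [dist_comm] using hsummable
  have hcauchy : CauchySeq x := cauchySeq_of_summable_dist hdistsymm
  obtain ⟨u, hu⟩ := cauchySeq_tendsto_of_complete hcauchy
  have hgu : Tendsto (fun n => g (x n)) atTop (nhds (g u)) := (hg.tendsto u).comp hu
  -- g u ≤ g (x n) for each n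
  have hgule : ∀ n, g u ≤ g (x n) := by
    intro n
    apply le_of_tendsto hgu
    filter_upwards [eventually_ge_atTop n] with m hm
    exact hganti hm
  refine ⟨u, (hgule 0).trans_eq (by rw [hx0]), ?_, ?_⟩
  · -- dist u u₀ ≤ lam
    have : ∀ n, dist (x n) u₀ ≤ lam := by
      intro n
      rw [← hx0]
      calc dist (x n) (x 0) ≤ ∑ i ∈ Finset.range n, dist (x (i+1)) (x i) := by
            have := dist_le_range_sum_dist x n
            simpa [dist_comm] using this
        _ ≤ lam := hsum' n
    have hd : Tendsto (fun n => dist (x n) u₀) atTop (nhds (dist u u₀)) :=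
      (Continuous.dist continuous_id continuous_const).tendsto u |>.comp hu
    exact le_of_tendsto hd (Eventually.of_forall this)
  · -- variational inequality
    intro v
    by_contra hcon
    push_neg at hcon
    -- v ∈ S (x n) for all n, by showing S is "closed under limits along the sequence"
    -- first: u ∈ S (x n) for all n
    have hnested : ∀ n m, n ≤ m → x m ∈ S (x n) := by
      intro n m hnm
      induction m with
      | zero => simp_all [Nat.le_zero.mp hnm, hmem]
      | succ m ih =>
        rcases Nat.lt_or_ge n (m+1) with h | h
        · have hm : n ≤ m := Nat.lt_succ_iff.mp h
          have h1 := ih hm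
          have h2 := hstep m
          simp only [hS, Set.mem_setOf_eq] at h1 h2 ⊢
          have := dist_triangle (x (m+1)) (x m) (x n)
          nlinarith [hσ]
        · have hn : n = m + 1 := le_antisymm hnm h
          subst hn
          exact hmem _
    have huS : ∀ n, u ∈ S (x n) := by
      intro n
      have hcl : IsClosed (S (x n)) := by
        apply isClosed_le
        · exact hg.add (continuous_const.mul (Continuous.dist continuous_id continuous_const))
        · exact continuous_const
      apply hcl.mem_of_tendsto hu
      filter_upwards [eventually_ge_atTop n] with m hm
      exact hnested n m hm
    -- then v ∈ S (x (n+1)) for all n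
    have hvS : ∀ n, v ∈ S (x n) := by
      intro n
      simp only [hS, Set.mem_setOf_eq]
      have h1 := huS n
      simp only [hS, Set.mem_setOf_eq] at h1
      have := dist_triangle v u (x n)
      nlinarith [hcon]
    -- so g (x (n+1)) ≤ g v + (1/2)^n
    have hle : ∀ n, g (x (n+1)) ≤ g v + (1/2)^n := by
      intro n
      rw [hxsucc]
      refine (hnext₂ (x n) n).trans ?_
      have : sInf (Set.image g (S (x n))) ≤ g v := csInf_le (hSbdd _) ⟨v, hvS n, rfl⟩
      linarith
    have : g u ≤ g v := by
      have h2 : Tendsto (fun n => g v + (1/2:ℝ)^n) atTop (nhds (g v + 0)) := by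
        exact tendsto_const_nhds.add (tendsto_pow_atTop_nhds_zero_of_lt_one (by norm_num) (by norm_num))
      rw [add_zero] at h2
      exact le_of_tendsto_of_tendsto' (hgu.comp (tendsto_add_atTop_nat 1)) h2 hle
    nlinarith [hcon, dist_nonneg (x := v) (y := u), hσ]

lemma claimC
    (hbot : ∀ N μ, E N μ ≠ ⊥)
    (hproper : ∀ N, ∃ μ, E N μ ≠ ⊤)
    (hlim : ∀ u : C(X, ℝ),
      Tendsto (fun N => ⨆ μ : ProbabilityMeasure X, (((pairR u μ : ℝ) : EReal) - E N μ)) atTop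
        (nhds ((f u : ℝ) : EReal)))
    (hcont : Continuous f)
    (hGat : ∀ u : C(X, ℝ), ∃ L : C(X, ℝ) →L[ℝ] ℝ,
      ∀ v : C(X, ℝ), HasDerivAt (fun t : ℝ => f (u + t • v)) (L v) 0)
    (μ : ProbabilityMeasure X) (m : ℝ)
    (hm : (⨆ u : C(X, ℝ), ((pairR u μ - f u : ℝ) : EReal)) = (m : EReal))
    (k : ℕ) (hk : 0 < k) :
    ∃ (ρ : ℕ → ProbabilityMeasure X) (c : C(X, ℝ) → ℝ),
      (∀ w, Tendsto (fun N => pairR w (ρ N)) atTop (nhds (c w))) ∧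
      (∀ w, |c w - pairR w μ| ≤ (1 / k) * ‖w‖) ∧
      (∀ᶠ N in atTop, E N (ρ N) ≤ ((m + 1 / k : ℝ) : EReal)) := by
  have hkR : (0:ℝ) < (k : ℝ) := Nat.cast_pos.mpr hk
  set εq : ℝ := 1 / (3 * k) with hεqdef
  have hεq : 0 < εq := by positivity
  -- upper bound on the Legendre function
  have hFle : ∀ v : C(X, ℝ), pairR v μ - f v ≤ m := by
    intro v
    have : ((pairR v μ - f v : ℝ) : EReal) ≤ (m : EReal) := by
      rw [← hm]; exact le_iSup (fun u => ((pairR u μ - f u : ℝ) : EReal)) v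
    exact_mod_cast this
  -- near-optimal u₀
  obtain ⟨u₀, hu₀⟩ : ∃ u₀ : C(X, ℝ), m - εq < pairR u₀ μ - f u₀ := by
    have : ((m - εq : ℝ) : EReal) < ⨆ u : C(X, ℝ), ((pairR u μ - f u : ℝ) : EReal) := by
      rw [hm]; exact_mod_cast sub_lt_self m hεq
    obtain ⟨u₀, h⟩ := lt_iSup_iff.mp this
    exact ⟨u₀, by exact_mod_cast h⟩
  -- Ekeland
  set g : C(X, ℝ) → ℝ := fun v => f v - pairR v μ with hgdef
  have hpaircont : Continuous fun v : C(X, ℝ) => pairR v μ := by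
    apply (LipschitzWith.of_dist_le_mul (K := 1) ?_).continuous
    intro u v
    simpa [Real.dist_eq] using abs_pairR_sub_le u v μ
  have hgcont : Continuous g := hcont.sub hpaircont
  have hbelow : ∀ v, g u₀ - εq ≤ g v := by
    intro v
    have h1 : g u₀ < -m + εq := by simp only [hgdef]; linarith
    have h2 : -m ≤ g v := by have := hFle v; simp only [hgdef]; linarith
    linarith
  set lam : ℝ := 1 + ‖u₀‖ with hlamdef
  have hlam : 0 < lam := by positivity
  obtain ⟨uh, huh1, huh2, huh3⟩ := my_ekeland_s5 g hgcont u₀ hεq hlam hbelow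
  set σ : ℝ := εq / lam with hσdef
  have hσpos : 0 < σ := div_pos hεq hlam
  have hσεq : σ ≤ εq := by
    rw [hσdef]
    exact div_le_self hεq.le (by nlinarith [norm_nonneg u₀])
  have huhnorm : ‖uh‖ ≤ ‖u₀‖ + lam := by
    have h1 : dist uh u₀ = ‖uh - u₀‖ := dist_eq_norm _ _
    have h2 : ‖uh‖ - ‖u₀‖ ≤ ‖uh - u₀‖ := norm_sub_norm_le uh u₀
    rw [h1] at huh2
    linarith
  have hσuh : σ * ‖uh‖ ≤ 2 * εq := by
    calc σ * ‖uh‖ ≤ σ * (‖u₀‖ + lam) := by nlinarith [norm_nonneg uh]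
      _ ≤ σ * (2 * lam) := by nlinarith [hσpos, hlamdef]
      _ = 2 * (εq / lam * lam) := by rw [hσdef]; ring
      _ = 2 * εq := by rw [div_mul_cancel₀ _ hlam.ne']
  -- gradient L at uh
  obtain ⟨L, hL⟩ := hGat uh
  -- Ekeland inequality in directional form
  have hEk : ∀ (w : C(X, ℝ)) (t : ℝ),
      t * pairR w μ - σ * (|t| * ‖w‖) ≤ f (uh + t • w) - f uh := by
    intro w t
    have h := huh3 (uh + t • w)
    have hd : dist (uh + t • w) uh = |t| * ‖w‖ := by
      rw [dist_eq_norm, add_sub_cancel_left]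
      exact (norm_smul t w).trans (by rw [Real.norm_eq_abs])
    rw [hd] at h
    have hp := pairR_add_smul uh w t μ
    simp only [hgdef] at h
    linarith
  -- slope convergence
  have hslope : ∀ w : C(X, ℝ),
      Tendsto (fun t : ℝ => (f (uh + t • w) - f uh) / t) (nhdsWithin 0 {(0:ℝ)}ᶜ) (nhds (L w)) := by
    intro w
    have := hasDerivAt_iff_tendsto_slope.mp (hL w)
    rw [slope_fun_def_field] at this
    have h0 : uh + (0:ℝ) • w = uh := by simp
    simpa [h0] using this
  have hLle : ∀ w : C(X, ℝ), |L w - pairR w μ| ≤ σ * ‖w‖ := by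
    intro w
    rw [abs_sub_le_iff]
    constructor
    · -- L w - pairR w μ ≤ σ ‖w‖ : use t < 0
      have hmem : Set.Iio (0:ℝ) ⊆ {(0:ℝ)}ᶜ := fun x hx => ne_of_lt hx
      have htd : Tendsto (fun t : ℝ => (f (uh + t • w) - f uh) / t) (nhdsWithin 0 (Set.Iio 0))
          (nhds (L w)) := (hslope w).mono_left (nhdsWithin_mono _ hmem)
      have hub : ∀ᶠ t in nhdsWithin (0:ℝ) (Set.Iio 0),
          (f (uh + t • w) - f uh) / t ≤ pairR w μ + σ * ‖w‖ := by
        filter_upwards [self_mem_nhdsWithin] with t ht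
        have htneg : t < 0 := ht
        have h := hEk w t
        rw [abs_of_neg htneg] at h
        rw [div_le_iff_of_neg htneg]
        nlinarith
      have := le_of_tendsto htd hub
      linarith
    · -- pairR w μ - L w ≤ σ ‖w‖ : use t > 0
      have hmem : Set.Ioi (0:ℝ) ⊆ {(0:ℝ)}ᶜ := fun x hx => ne_of_gt hx
      have htd : Tendsto (fun t : ℝ => (f (uh + t • w) - f uh) / t) (nhdsWithin 0 (Set.Ioi 0))
          (nhds (L w)) := (hslope w).mono_left (nhdsWithin_mono _ hmem)
      have hlb : ∀ᶠ t in nhdsWithin (0:ℝ) (Set.Ioi 0),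
          pairR w μ - σ * ‖w‖ ≤ (f (uh + t • w) - f uh) / t := by
        filter_upwards [self_mem_nhdsWithin] with t ht
        have htpos : (0:ℝ) < t := ht
        have h := hEk w t
        rw [abs_of_pos htpos] at h
        rw [le_div_iff₀ htpos]
        nlinarith
      have := ge_of_tendsto htd hlb
      linarith
  -- near maximizers
  set S : ℕ → EReal := fun N => ⨆ ν : ProbabilityMeasure X, (((pairR uh ν : ℝ) : EReal) - E N ν)
    with hSdef
  have hS : Tendsto S atTop (nhds ((f uh : ℝ) : EReal)) := hlim uh
  set b : ℕ → EReal := fun N =>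
    if S N = ⊤ then ((N : ℝ) : EReal) else (((S N).toReal - 1/((N:ℝ)+1) : ℝ) : EReal) with hbdef
  have hbS : ∀ N, b N < S N := by
    intro N
    simp only [hbdef]
    by_cases h : S N = ⊤
    · rw [if_pos h, h]; exact EReal.coe_lt_top _
    · rw [if_neg h]
      have hSnebot : S N ≠ ⊥ := by
        obtain ⟨ν₀, hν₀⟩ := hproper N
        have h1 : (((pairR uh ν₀ : ℝ) : EReal) - E N ν₀) ≤ S N := by
          simp only [hSdef]
          exact le_iSup (fun ν : ProbabilityMeasure X => (((pairR uh ν : ℝ) : EReal) - E N ν)) ν₀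
        intro hb
        rw [hb, le_bot_iff] at h1
        have hE : E N ν₀ = ((E N ν₀).toReal : EReal) := (EReal.coe_toReal hν₀ (hbot N ν₀)).symm
        rw [hE, ← EReal.coe_sub] at h1
        exact EReal.coe_ne_bot _ h1
      conv_rhs => rw [← EReal.coe_toReal h hSnebot]
      rw [EReal.coe_lt_coe_iff]
      have : (0:ℝ) < 1/((N:ℝ)+1) := by positivity
      linarith
  have hchoice : ∀ N, ∃ ν : ProbabilityMeasure X, b N < ((pairR uh ν : ℝ) : EReal) - E N ν :=
    fun N => lt_iSup_iff.mp (hbS N)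
  set ρ : ℕ → ProbabilityMeasure X := fun N => (hchoice N).choose with hρdef
  have hρ : ∀ N, b N < ((pairR uh (ρ N) : ℝ) : EReal) - E N (ρ N) := fun N => (hchoice N).choose_spec
  set a : ℕ → ℝ := fun N => pairR uh (ρ N) with hadef
  set e : ℕ → ℝ := fun N => (E N (ρ N)).toReal with hedef
  have hev_top : ∀ᶠ N in atTop, S N < ⊤ := hS.eventually_lt_const (EReal.coe_lt_top _)
  have hsR : Tendsto (fun N => (S N).toReal) atTop (nhds (f uh)) := by
    have := (EReal.tendsto_toReal (EReal.coe_ne_top _) (EReal.coe_ne_bot _)).comp hS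
    simpa [Function.comp_def] using this
  have hkey : ∀ᶠ N in atTop, E N (ρ N) = ((e N : ℝ) : EReal)
      ∧ (S N).toReal - 1/((N:ℝ)+1) < a N - e N := by
    filter_upwards [hev_top] with N hN
    have h := hρ N
    simp only [hbdef] at h
    rw [if_neg hN.ne] at h
    have hEne : E N (ρ N) ≠ ⊤ := by
      intro htop
      rw [htop, EReal.sub_top] at h
      exact absurd h (not_lt.mpr bot_le)
    have hEeq : E N (ρ N) = ((e N : ℝ) : EReal) := (EReal.coe_toReal hEne (hbot _ _)).symm
    refine ⟨hEeq, ?_⟩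
    rw [hEeq, ← EReal.coe_sub] at h
    exact_mod_cast h
  -- the fundamental eventual inequality, for each direction (t, w)
  have hineq : ∀ (t : ℝ) (w : C(X, ℝ)), ∀ᶠ N in atTop,
      t * pairR w (ρ N) <
        (⨆ ν : ProbabilityMeasure X, (((pairR (uh + t • w) ν : ℝ) : EReal) - E N ν)).toReal
          - (S N).toReal + 1/((N:ℝ)+1) := by
    intro t w
    have hS' := hlim (uh + t • w)
    have hev_top' : ∀ᶠ N in atTop,
        (⨆ ν : ProbabilityMeasure X, (((pairR (uh + t • w) ν : ℝ) : EReal) - E N ν)) < ⊤ :=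
      hS'.eventually_lt_const (EReal.coe_lt_top _)
    filter_upwards [hkey, hev_top'] with N hN hN'
    set S' : EReal := ⨆ ν : ProbabilityMeasure X, (((pairR (uh + t • w) ν : ℝ) : EReal) - E N ν)
      with hS'def
    have hle : ((pairR (uh + t • w) (ρ N) : ℝ) : EReal) - E N (ρ N) ≤ S' :=
      le_iSup (fun ν => (((pairR (uh + t • w) ν : ℝ) : EReal) - E N ν)) (ρ N)
    rw [hN.1, ← EReal.coe_sub] at hle
    have hS'nb : S' ≠ ⊥ := fun hb => by
      rw [hb, le_bot_iff] at hle; exact EReal.coe_ne_bot _ hle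
    rw [← EReal.coe_toReal hN'.ne hS'nb, EReal.coe_le_coe_iff] at hle
    have hlin : pairR (uh + t • w) (ρ N) = a N + t * pairR w (ρ N) := pairR_add_smul uh w t (ρ N)
    rw [hlin] at hle
    have h2 := hN.2
    linarith
  -- convergence of the pairings of the near maximizers
  have hconv : ∀ w : C(X, ℝ), Tendsto (fun N => pairR w (ρ N)) atTop (nhds (L w)) := by
    intro w
    have hRHS : ∀ t : ℝ, Tendsto (fun N =>
        (⨆ ν : ProbabilityMeasure X, (((pairR (uh + t • w) ν : ℝ) : EReal) - E N ν)).toReal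
          - (S N).toReal + 1/((N:ℝ)+1)) atTop (nhds (f (uh + t • w) - f uh)) := by
      intro t
      have h1 : Tendsto (fun N =>
          (⨆ ν : ProbabilityMeasure X, (((pairR (uh + t • w) ν : ℝ) : EReal) - E N ν)).toReal)
          atTop (nhds (f (uh + t • w))) := by
        have := (EReal.tendsto_toReal (EReal.coe_ne_top _) (EReal.coe_ne_bot _)).comp
          (hlim (uh + t • w))
        simpa [Function.comp_def] using this
      have h3 : Tendsto (fun N : ℕ => 1/((N:ℝ)+1)) atTop (nhds 0) :=
        tendsto_one_div_add_atTop_nhds_zero_nat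
      have := (h1.sub hsR).add h3
      simpa using this
    rw [Metric.tendsto_atTop]
    intro ε hε
    -- choose t₁ > 0
    obtain ⟨t₁, ht₁pos, ht₁⟩ : ∃ t : ℝ, 0 < t ∧ f (uh + t • w) - f uh < t * (L w + ε/2) := by
      have htd : Tendsto (fun t : ℝ => (f (uh + t • w) - f uh) / t) (nhdsWithin 0 (Set.Ioi 0))
          (nhds (L w)) := (hslope w).mono_left (nhdsWithin_mono _ (fun x hx => ne_of_gt hx))
      have hev := htd.eventually_lt_const (show L w < L w + ε/2 by linarith)
      obtain ⟨t, ht, htmem⟩ := (hev.and self_mem_nhdsWithin).exists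
      refine ⟨t, htmem, ?_⟩
      rw [div_lt_iff₀ htmem] at ht
      linarith [ht]
    -- choose t₂ < 0
    obtain ⟨t₂, ht₂neg, ht₂⟩ : ∃ t : ℝ, t < 0 ∧ f (uh + t • w) - f uh < t * (L w - ε/2) := by
      have htd : Tendsto (fun t : ℝ => (f (uh + t • w) - f uh) / t) (nhdsWithin 0 (Set.Iio 0))
          (nhds (L w)) := (hslope w).mono_left (nhdsWithin_mono _ (fun x hx => ne_of_lt hx))
      have hev := htd.eventually_const_lt (show L w - ε/2 < L w by linarith)
      obtain ⟨t, ht, htmem⟩ := (hev.and self_mem_nhdsWithin).exists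
      refine ⟨t, htmem, ?_⟩
      rw [lt_div_iff_of_neg htmem] at ht
      linarith [ht]
    have hup : ∀ᶠ N in atTop, pairR w (ρ N) < L w + ε := by
      have hev2 : ∀ᶠ N in atTop,
          (⨆ ν : ProbabilityMeasure X, (((pairR (uh + t₁ • w) ν : ℝ) : EReal) - E N ν)).toReal
            - (S N).toReal + 1/((N:ℝ)+1) < t₁ * (L w + ε) :=
        (hRHS t₁).eventually_lt_const (by nlinarith)
      filter_upwards [hineq t₁ w, hev2] with N h1 h2
      have h3 := h1.trans h2
      exact (mul_lt_mul_iff_right₀ ht₁pos).mp h3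
    have hdown : ∀ᶠ N in atTop, L w - ε < pairR w (ρ N) := by
      have hev2 : ∀ᶠ N in atTop,
          (⨆ ν : ProbabilityMeasure X, (((pairR (uh + t₂ • w) ν : ℝ) : EReal) - E N ν)).toReal
            - (S N).toReal + 1/((N:ℝ)+1) < t₂ * (L w - ε) :=
        (hRHS t₂).eventually_lt_const (by nlinarith)
      filter_upwards [hineq t₂ w, hev2] with N h1 h2
      have h3 := h1.trans h2
      nlinarith [h3]
    have hfin : ∀ᶠ N in atTop, dist (pairR w (ρ N)) (L w) < ε := by
      filter_upwards [hup, hdown] with N h1 h2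
      rw [Real.dist_eq, abs_sub_lt_iff]
      constructor <;> linarith
    exact eventually_atTop.mp hfin
  -- conclusion
  refine ⟨ρ, fun w => L w, hconv, ?_, ?_⟩
  · intro w
    have h1 := hLle w
    have h2 : σ * ‖w‖ ≤ (1/(k:ℝ)) * ‖w‖ := by
      apply mul_le_mul_of_nonneg_right ?_ (norm_nonneg w)
      have : εq ≤ 1/(k:ℝ) := by
        rw [hεqdef]
        rw [div_le_div_iff₀ (by positivity) hkR]
        nlinarith
      linarith
    exact h1.trans (by linarith)
  · -- eventual energy bound
    have haconv : Tendsto a atTop (nhds (L uh)) := hconv uh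
    have hupper : Tendsto (fun N => a N - (S N).toReal + 1/((N:ℝ)+1)) atTop
        (nhds (L uh - f uh)) := by
      have h3 : Tendsto (fun N : ℕ => 1/((N:ℝ)+1)) atTop (nhds 0) :=
        tendsto_one_div_add_atTop_nhds_zero_nat
      have := (haconv.sub hsR).add h3
      simpa using this
    have hLuh : L uh - f uh < m + 1/(k:ℝ) := by
      have h1 := hLle uh
      have h2 := hFle uh
      have h3 : |L uh - pairR uh μ| ≤ σ * ‖uh‖ := h1
      have h4 : (3:ℝ) * εq = 1/(k:ℝ) := by
        rw [hεqdef]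
        field_simp
      have h5 := abs_le.mp h3
      nlinarith [hσuh, hεq]
    have hev3 : ∀ᶠ N in atTop, a N - (S N).toReal + 1/((N:ℝ)+1) < m + 1/(k:ℝ) :=
      hupper.eventually_lt_const hLuh
    filter_upwards [hkey, hev3] with N h1 h2
    rw [h1.1, EReal.coe_le_coe_iff]
    have := h1.2
    linarith

lemma part2
    (hbot : ∀ N μ, E N μ ≠ ⊥)
    (hproper : ∀ N, ∃ μ, E N μ ≠ ⊤)
    (hlim : ∀ u : C(X, ℝ),
      Tendsto (fun N => ⨆ μ : ProbabilityMeasure X, (((pairR u μ : ℝ) : EReal) - E N μ)) atTop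
        (nhds ((f u : ℝ) : EReal)))
    (hcont : Continuous f)
    (hGat : ∀ u : C(X, ℝ), ∃ L : C(X, ℝ) →L[ℝ] ℝ,
      ∀ v : C(X, ℝ), HasDerivAt (fun t : ℝ => f (u + t • v)) (L v) 0)
    (μ : ProbabilityMeasure X) :
    ∃ μs : ℕ → ProbabilityMeasure X,
      Tendsto μs atTop (nhds μ) ∧
      Tendsto (fun N => E N (μs N)) atTop
        (nhds (⨆ u : C(X, ℝ), ((pairR u μ - f u : ℝ) : EReal))) := by
  set F : EReal := ⨆ u : C(X, ℝ), ((pairR u μ - f u : ℝ) : EReal) with hFdef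
  by_cases htop : F = ⊤
  · -- trivial recovery sequence: any sequence works, e.g. the constant one
    refine ⟨fun _ => μ, tendsto_const_nhds, ?_⟩
    have h1 : liminf (fun N => E N μ) atTop = ⊤ := by
      apply top_unique
      rw [← htop, hFdef]
      exact part1 E f hbot hlim μ (fun _ => μ) tendsto_const_nhds
    have h2 : limsup (fun N => E N μ) atTop = ⊤ :=
      top_unique (h1 ▸ liminf_le_limsup)
    rw [htop]
    exact tendsto_of_liminf_eq_limsup h1 h2
  · -- main case : F < ⊤
    have hFbot : F ≠ ⊥ := by
      rw [hFdef]
      intro hb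
      have : ((pairR 0 μ - f 0 : ℝ) : EReal) ≤ ⊥ := by
        rw [← hb]; exact le_iSup (fun u : C(X, ℝ) => ((pairR u μ - f u : ℝ) : EReal)) 0
      exact EReal.coe_ne_bot _ (le_bot_iff.mp this)
    set m : ℝ := F.toReal with hmdef
    have hFm : F = (m : EReal) := (EReal.coe_toReal htop hFbot).symm
    -- apply claimC for each k
    have hck : ∀ k : ℕ, ∃ (ρ : ℕ → ProbabilityMeasure X) (c : C(X, ℝ) → ℝ),
        (∀ w, Tendsto (fun N => pairR w (ρ N)) atTop (nhds (c w))) ∧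
        (∀ w, |c w - pairR w μ| ≤ (1 / (k+1)) * ‖w‖) ∧
        (∀ᶠ N in atTop, E N (ρ N) ≤ ((m + 1 / (k+1) : ℝ) : EReal)) := by
      intro k
      have := claimC E f hbot hproper hlim hcont hGat μ m (hFdef ▸ hFm) (k+1) (Nat.succ_pos k)
      simpa using this
    choose ρ c hc1 hc2 hc3 using hck
    -- dense sequence in C(X,ℝ)
    obtain ⟨ws, hws⟩ := TopologicalSpace.exists_dense_seq C(X, ℝ)
    -- thresholds
    have hMex : ∀ k : ℕ, ∃ M : ℕ, ∀ N ≥ M,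
        (∀ j ≤ k, |pairR (ws j) (ρ k N) - c k (ws j)| ≤ 1 / ((k:ℝ)+1)) ∧
        E N (ρ k N) ≤ ((m + 1 / ((k:ℝ)+1) : ℝ) : EReal) := by
      intro k
      have h1 : ∀ᶠ N in atTop, ∀ j ∈ Finset.range (k+1),
          |pairR (ws j) (ρ k N) - c k (ws j)| ≤ 1 / ((k:ℝ)+1) := by
        rw [eventually_all_finset]
        intro j hj
        have hball := hc1 k (ws j) (Metric.closedBall_mem_nhds (c k (ws j))
          (show (0:ℝ) < 1 / ((k:ℝ)+1) by positivity))
        filter_upwards [hball] with N hN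
        simpa [Metric.mem_closedBall, Real.dist_eq] using hN
      have h2 := (h1.and (hc3 k))
      obtain ⟨M, hM⟩ := eventually_atTop.mp h2
      refine ⟨M, fun N hN => ⟨fun j hj => (hM N hN).1 j (Finset.mem_range_succ_iff.mpr hj),
        (hM N hN).2⟩⟩
    choose M hM using hMex
    -- strictly increasing thresholds
    set MM : ℕ → ℕ := fun k => Nat.rec (M 0) (fun k mk => max (mk + 1) (M (k+1))) k with hMMdef
    have hMM0 : MM 0 = M 0 := rfl
    have hMMsucc : ∀ k, MM (k+1) = max (MM k + 1) (M (k+1)) := fun k => rfl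
    have hMMge : ∀ k, M k ≤ MM k := by
      intro k
      cases k with
      | zero => exact le_refl _
      | succ k => rw [hMMsucc]; exact le_max_right _ _
    have hMMmono : StrictMono MM := strictMono_nat_of_lt_succ (fun k => by
      rw [hMMsucc]; exact lt_of_lt_of_le (Nat.lt_succ_self _) (le_max_left _ _))
    -- the diagonal index
    set K : ℕ → ℕ := fun N => Nat.findGreatest (fun k => MM k ≤ N) N with hKdef
    have hKP : ∀ N, MM 0 ≤ N → MM (K N) ≤ N := by
      intro N hN
      simp only [hKdef]
      exact Nat.findGreatest_spec (P := fun k => MM k ≤ N) (Nat.zero_le N) hN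
    have hKge : ∀ k N, MM k ≤ N → k ≤ K N := by
      intro k N hkN
      have hkN' : k ≤ N := le_trans hMMmono.le_apply hkN
      simp only [hKdef]
      exact Nat.le_findGreatest hkN' hkN
    -- the recovery sequence
    set μs : ℕ → ProbabilityMeasure X := fun N => ρ (K N) N with hμsdef
    have hKtend : Tendsto K atTop atTop := by
      rw [tendsto_atTop_atTop]
      intro k
      exact ⟨MM k, fun N hN => hKge k N hN⟩
    -- convergence μs → μ
    have hμstend : Tendsto μs atTop (nhds μ) := by
      rw [ProbabilityMeasure.tendsto_iff_forall_integral_tendsto]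
      intro gb
      -- reduce to pairR with w := gb.toContinuousMap
      have key : ∀ w : C(X, ℝ), Tendsto (fun N => pairR w (μs N)) atTop (nhds (pairR w μ)) := by
        intro w
        rw [Metric.tendsto_atTop]
        intro ε hε
        obtain ⟨j, hj⟩ := hws.exists_dist_lt w (show (0:ℝ) < ε/4 by linarith)
        have hwsj : dist (ws j) w < ε/4 := by rw [dist_comm] at hj; exact hj
        -- choose k₀ with (1/(k₀+1))*(1 + ‖ws j‖ + 1) < ε/4  etc.
        obtain ⟨k₀, hk₀⟩ := exists_nat_one_div_lt
          (show (0:ℝ) < ε/4 / (1 + ‖ws j‖ + 1) by positivity)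
        set k₁ : ℕ := max j k₀ with hk₁def
        refine ⟨max (MM 0) (MM k₁), fun N hN => ?_⟩
        have hN0 : MM 0 ≤ N := le_trans (le_max_left _ _) hN
        have hNk₁ : MM k₁ ≤ N := le_trans (le_max_right _ _) hN
        have hKN : k₁ ≤ K N := hKge k₁ N hNk₁
        have hjK : j ≤ K N := le_trans (le_max_left _ _) hKN
        have hk₀K : k₀ ≤ K N := le_trans (le_max_right _ _) hKN
        have hMKN : M (K N) ≤ N := le_trans (hMMge _) (hKP N hN0)
        have hctrl := (hM (K N) N hMKN).1 j hjK
        have hc2' := hc2 (K N) (ws j)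
        -- assemble
        have e1 : |pairR w (μs N) - pairR (ws j) (μs N)| ≤ dist w (ws j) :=
          abs_pairR_sub_le w (ws j) (μs N)
        have e4 : |pairR (ws j) μ - pairR w μ| ≤ dist (ws j) w :=
          abs_pairR_sub_le (ws j) w μ
        have hKb : 1 / ((K N : ℝ)+1) ≤ 1 / ((k₀:ℝ)+1) := by
          apply div_le_div_of_nonneg_left (by norm_num) (by positivity)
          · exact_mod_cast Nat.succ_le_succ hk₀K
        have hδ : 1 / ((k₀:ℝ)+1) * (1 + ‖ws j‖ + 1) < ε/4 := by
          exact (lt_div_iff₀ (show (0:ℝ) < 1 + ‖ws j‖ + 1 by positivity)).mp hk₀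
        rw [Real.dist_eq]
        have hnorm : (0:ℝ) ≤ ‖ws j‖ := norm_nonneg _
        have total : |pairR w (μs N) - pairR w μ| < ε := by
          have hμsN : μs N = ρ (K N) N := rfl
          rw [hμsN] at e1 ⊢
          have hb1 : 1 / ((K N : ℝ)+1) * (1 + ‖ws j‖ + 1) < ε / 4 := by
            calc 1 / ((K N : ℝ)+1) * (1 + ‖ws j‖ + 1)
                ≤ 1 / ((k₀:ℝ)+1) * (1 + ‖ws j‖ + 1) := by
                  apply mul_le_mul_of_nonneg_right hKb (by linarith)
              _ < ε/4 := hδ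
            
          have hKpos : (0:ℝ) < ((K N : ℝ)+1) := by positivity
          have hq1 : 1 / ((K N : ℝ)+1) ≤ 1 / ((K N : ℝ)+1) * (1 + ‖ws j‖ + 1) := by
            nlinarith [one_div_pos.mpr hKpos]
          have hq2 : 1 / ((K N : ℝ)+1) * ‖ws j‖ ≤ 1 / ((K N : ℝ)+1) * (1 + ‖ws j‖ + 1) := by
            nlinarith [one_div_pos.mpr hKpos]
          calc |pairR w (ρ (K N) N) - pairR w μ|
              ≤ |pairR w (ρ (K N) N) - pairR (ws j) (ρ (K N) N)|
                + |pairR (ws j) (ρ (K N) N) - c (K N) (ws j)|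
                + |c (K N) (ws j) - pairR (ws j) μ|
                + |pairR (ws j) μ - pairR w μ| := by
                  have t1 := abs_sub_le (pairR w (ρ (K N) N)) (pairR (ws j) (ρ (K N) N)) (pairR w μ)
                  have t2 := abs_sub_le (pairR (ws j) (ρ (K N) N)) (c (K N) (ws j)) (pairR w μ)
                  have t3 := abs_sub_le (c (K N) (ws j)) (pairR (ws j) μ) (pairR w μ)
                  linarith
            _ < ε := by
                have h2' : |pairR (ws j) (ρ (K N) N) - c (K N) (ws j)| ≤ 1 / ((K N : ℝ)+1) :=
                  hctrl
                have h3' : |c (K N) (ws j) - pairR (ws j) μ| ≤ 1 / ((K N:ℝ)+1) * ‖ws j‖ := hc2'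
                linarith [e1, e4, hj, hwsj, hq1.trans hb1.le, hq2.trans hb1.le,
                  h2'.trans (hq1.trans hb1.le), h3'.trans (hq2.trans hb1.le)]
        exact total
      have := key gb.toContinuousMap
      have heq : ∀ ν : ProbabilityMeasure X, pairR gb.toContinuousMap ν = ∫ x, gb x ∂(ν : Measure X) := by
        intro ν; rfl
      simp only [heq] at this
      exact this
    refine ⟨μs, hμstend, ?_⟩
    -- energy convergence
    have hliminf : F ≤ liminf (fun N => E N (μs N)) atTop :=
      part1 E f hbot hlim μ μs hμstend
    have hlimsup : limsup (fun N => E N (μs N)) atTop ≤ F := by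
      rw [hFm]
      by_contra hcon
      push_neg at hcon
      obtain ⟨cc, hcc1, hcc2⟩ := exists_between hcon
      -- cc is > coe m; get a bound limsup ≤ m + 1/(k+1) for every k
      have hup : ∀ k : ℕ, limsup (fun N => E N (μs N)) atTop ≤ ((m + 1 / ((k:ℝ)+1) : ℝ) : EReal) := by
        intro k
        apply limsup_le_of_le (by isBoundedDefault)
        filter_upwards [eventually_ge_atTop (MM 0), eventually_ge_atTop (MM k)] with N h0 hk
        have hKN : k ≤ K N := hKge k N hk
        have hMKN : M (K N) ≤ N := le_trans (hMMge _) (hKP N h0)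
        have hE := (hM (K N) N hMKN).2
        refine le_trans hE ?_
        rw [EReal.coe_le_coe_iff]
        have : 1 / ((K N : ℝ)+1) ≤ 1 / ((k:ℝ)+1) := by
          apply div_le_div_of_nonneg_left (by norm_num) (by positivity)
          · exact_mod_cast Nat.succ_le_succ hKN
        linarith
      -- derive contradiction
      rcases eq_or_ne cc ⊤ with hcctop | hccne
      · have := hcc2.trans_le (hup 0)
        rw [hcctop] at this
        exact absurd this (not_lt.mpr le_top)
      · have hccbot : cc ≠ ⊥ := ne_bot_of_gt hcc1
        set ccr : ℝ := cc.toReal with hccr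
        have hcceq : cc = (ccr : EReal) := (EReal.coe_toReal hccne hccbot).symm
        rw [hcceq] at hcc1 hcc2
        have hmcc : m < ccr := by exact_mod_cast hcc1
        obtain ⟨k, hk⟩ := exists_nat_one_div_lt (show (0:ℝ) < ccr - m by linarith)
        have := hcc2.trans_le (hup k)
        rw [EReal.coe_lt_coe_iff] at this
        linarith
    have heq : liminf (fun N => E N (μs N)) atTop = F :=
      le_antisymm (le_trans liminf_le_limsup hlimsup) hliminf
    have heq2 : limsup (fun N => E N (μs N)) atTop = F :=
      le_antisymm hlimsup (le_trans hliminf liminf_le_limsup)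
    exact tendsto_of_liminf_eq_limsup heq heq2





end parts

/-- A duality criterion for Γ-convergence: if the Legendre-type transforms
`E_N*(u) := sup_{μ ∈ M₁(X)} (⟨u,μ⟩ − E_N(μ))` converge pointwise to a real-valued, convex,
continuous, Gateaux differentiable functional `f` on `C⁰(X)`, then `E_N` Γ-converges to the
restriction of the Legendre–Fenchel transform `f*` to `M₁(X)` (with the weak-* topology). -/
theorem stmt5 {X : Type*} [MetricSpace X] [CompactSpace X] [MeasurableSpace X] [BorelSpace X]
    (E : ℕ → ProbabilityMeasure X → EReal)
    (hbot : ∀ N μ, E N μ ≠ ⊥)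
    (hlsc : ∀ N, LowerSemicontinuous (E N))
    (hproper : ∀ N, ∃ μ, E N μ ≠ ⊤)
    (f : C(X, ℝ) → ℝ)
    (hlim : ∀ u : C(X, ℝ),
      Tendsto (fun N => ⨆ μ : ProbabilityMeasure X,
          ((((∫ x, u x ∂(μ : Measure X)) : ℝ) : EReal) - E N μ)) atTop
        (nhds ((f u : ℝ) : EReal)))
    (hconv : ConvexOn ℝ Set.univ f) (hcont : Continuous f)
    (hGat : ∀ u : C(X, ℝ), ∃ L : C(X, ℝ) →L[ℝ] ℝ,
      ∀ v : C(X, ℝ), HasDerivAt (fun t : ℝ => f (u + t • v)) (L v) 0) :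
    (∀ (μ : ProbabilityMeasure X) (μs : ℕ → ProbabilityMeasure X),
        Tendsto μs atTop (nhds μ) →
        (⨆ u : C(X, ℝ), (((∫ x, u x ∂(μ : Measure X)) - f u : ℝ) : EReal))
          ≤ liminf (fun N => E N (μs N)) atTop) ∧
    (∀ μ : ProbabilityMeasure X, ∃ μs : ℕ → ProbabilityMeasure X,
        Tendsto μs atTop (nhds μ) ∧
        Tendsto (fun N => E N (μs N)) atTop
          (nhds (⨆ u : C(X, ℝ), (((∫ x, u x ∂(μ : Measure X)) - f u : ℝ) : EReal)))) := by
  have hlim' : ∀ u : C(X, ℝ),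
      Tendsto (fun N => ⨆ μ : ProbabilityMeasure X, (((pairR u μ : ℝ) : EReal) - E N μ)) atTop
        (nhds ((f u : ℝ) : EReal)) := hlim
  constructor
  · intro μ μs hμs
    exact part1 E f hbot hlim' μ μs hμs
  · intro μ
    exact part2 E f hbot hproper hlim' hcont hGat μ
end

section
/- Let X be a compact metric space, μ₀ a Borel probability measure on X, and for each N let H^{(N)} : X^N → ℝ be a symmetric lower semicontinuous (hence bounded below) Borel function. Let β₀ < 0 and assume Z_{N,β} := ∫_{X^N} e^{−β H^{(N)}} dμ₀^{⊗N} < ∞ for all β ≥ β₀ and all N. Assume there is a functional E : M₁(X) → (−∞,∞] with E(μ₀) finite such that for every β ≥ β₀, lim_{N→∞} −(1/N) log Z_{N,β} = f(β) := inf_{μ ∈ M₁(X)} ( βE(μ) + D_{μ₀}(μ) ) > −∞. If moreover the (concave) function f is differentiable at β = 0, then the mean energy lim_{N→∞} (1/N) ∫_{X^N} H^{(N)} dμ₀^{⊗N} exists and equals E(μ₀). -/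
open MeasureTheory Filter Classical

/-- The relative entropy `D_{μ₀}(μ) := ∫ log(dμ/dμ₀) dμ` if `μ ≪ μ₀` (with the convention
`+∞` when the log-likelihood ratio is not integrable), and `+∞` otherwise. -/
noncomputable def relEntropy {X : Type*} [MeasurableSpace X] (μ₀ μ : Measure X) : EReal :=
  if μ ≪ μ₀ ∧ Integrable (llr μ μ₀) μ then ((∫ x, llr μ μ₀ x ∂μ : ℝ) : EReal) else ⊤

/-!
Testing the variational formula for `f` with `μ = μ₀` gives `f β ≤ β E(μ₀)` for `β ≥ β₀`, while
`f 0 = 0` because `Z_{N,0} = 1`; since `f` is differentiable at `0`, this forces `f'(0) = E(μ₀)`.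
On the other hand Jensen's inequality `exp (-β ∫ H) ≤ ∫ exp (-β H)` gives
`-(1/N) log Z_{N,β} ≤ β · (1/N) ∫ H^{(N)}`. Letting `N → ∞` bounds the mean energy from below by
`f β / β` for `β > 0` and from above by `f β / β` for `β < 0`; both slopes tend to `f'(0)`.
-/

open Real Topology

lemma relEntropy_self {X : Type*} [MeasurableSpace X] (μ₀ : Measure X) [IsFiniteMeasure μ₀] :
    relEntropy μ₀ μ₀ = 0 := by
  have hllr : llr μ₀ μ₀ =ᵐ[μ₀] fun _ => (0 : ℝ) := by
    filter_upwards [μ₀.rnDeriv_self] with x hx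
    simp [llr, hx]
  rw [relEntropy, if_pos ⟨Measure.AbsolutelyContinuous.refl μ₀,
    (integrable_const (0 : ℝ)).congr hllr.symm⟩, integral_congr_ae hllr]
  simp

lemma HasDerivAt.eq_of_eventually_le_tangent {f : ℝ → ℝ} {f' r x : ℝ} (hf : HasDerivAt f f' x)
    (hle : ∀ᶠ y in 𝓝 x, f y ≤ f x + r * (y - x)) : f' = r := by
  have hmax : IsLocalMax (fun y => f y - r * y) x := by
    filter_upwards [hle] with y hy
    linarith
  have hderiv := hf.sub ((hasDerivAt_id' x).const_mul r)
  rw [mul_one] at hderiv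
  linarith [hmax.hasDerivAt_eq_zero hderiv]

lemma tendsto_of_le_mul_of_hasDerivAt_zero {g : ℕ → ℝ → ℝ} {a : ℕ → ℝ} {f : ℝ → ℝ} {r : ℝ}
    (hf : HasDerivAt f r 0) (hf0 : f 0 = 0)
    (hg : ∀ᶠ β in 𝓝 0, Tendsto (g · β) atTop (𝓝 (f β)))
    (hle : ∀ᶠ β in 𝓝 0, ∀ N, g N β ≤ β * a N) : Tendsto a atTop (𝓝 r) := by
  have hslope : Tendsto (fun β => f β / β) (𝓝[≠] 0) (𝓝 r) :=
    (hasDerivAt_iff_tendsto_slope.mp hf).congr fun β => by simp [slope_def_field, hf0]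
  have hnear : ∀ᶠ β in 𝓝[≠] 0, Tendsto (g · β) atTop (𝓝 (f β)) ∧ ∀ N, g N β ≤ β * a N :=
    (hg.and hle).filter_mono nhdsWithin_le_nhds
  rw [tendsto_order]
  constructor
  · intro b hb
    have hpos : 𝓝[>] (0 : ℝ) ≤ 𝓝[≠] 0 := nhdsWithin_mono _ fun _ h => ne_of_gt h
    obtain ⟨β, ⟨hbβ, hlim, hgle⟩, hβ : 0 < β⟩ := (((hslope.mono_left hpos).eventually
      (eventually_gt_nhds hb)).and (hnear.filter_mono hpos) |>.and self_mem_nhdsWithin).exists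
    have hβb : β * b < f β := by
      rwa [lt_div_iff₀ hβ, mul_comm] at hbβ
    filter_upwards [hlim.eventually (eventually_gt_nhds hβb)] with N hN
    exact lt_of_mul_lt_mul_left (hN.trans_le (hgle N)) hβ.le
  · intro b hb
    have hneg : 𝓝[<] (0 : ℝ) ≤ 𝓝[≠] 0 := nhdsWithin_mono _ fun _ h => ne_of_lt h
    obtain ⟨β, ⟨hbβ, hlim, hgle⟩, hβ : β < 0⟩ := (((hslope.mono_left hneg).eventually
      (eventually_lt_nhds hb)).and (hnear.filter_mono hneg) |>.and self_mem_nhdsWithin).exists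
    have hβb : β * b < f β := by
      rwa [div_lt_iff_of_neg hβ, mul_comm] at hbβ
    filter_upwards [hlim.eventually (eventually_gt_nhds hβb)] with N hN
    exact lt_of_mul_lt_mul_of_nonpos_left (hN.trans_le (hgle N)) hβ.le

lemma integral_le_log_integral_exp {Ω : Type*} [MeasurableSpace Ω] {μ : Measure Ω}
    [IsProbabilityMeasure μ] {h : Ω → ℝ} (hh : Integrable h μ)
    (hexp : Integrable (fun x => exp (h x)) μ) : ∫ x, h x ∂μ ≤ log (∫ x, exp (h x) ∂μ) := by
  have hJensen : exp (∫ x, h x ∂μ) ≤ ∫ x, exp (h x) ∂μ :=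
    convexOn_exp.map_integral_le continuous_exp.continuousOn isClosed_univ
      (Eventually.of_forall fun _ => trivial) hh hexp
  rwa [le_log_iff_exp_le ((exp_pos _).trans_le hJensen)]

section PartitionFunction

variable {Ω : Type*} [MeasurableSpace Ω] {μ : Measure Ω} {H : Ω → ℝ} {β : ℝ}

lemma integrable_exp_neg_mul_of_lintegral_ne_top (hH : AEStronglyMeasurable H μ)
    (hZ : ∫⁻ x, ENNReal.ofReal (exp (-β * H x)) ∂μ ≠ ⊤) :
    Integrable (fun x => exp (-β * H x)) μ :=
  (lintegral_ofReal_ne_top_iff_integrable (by fun_prop)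
    (Eventually.of_forall fun _ => (exp_pos _).le)).mp hZ

lemma neg_mul_integral_le_log_lintegral_exp [IsProbabilityMeasure μ] (hH : Integrable H μ)
    (hZ : ∫⁻ x, ENNReal.ofReal (exp (-β * H x)) ∂μ ≠ ⊤) :
    -β * ∫ x, H x ∂μ ≤ log (∫⁻ x, ENNReal.ofReal (exp (-β * H x)) ∂μ).toReal := by
  have hZint := integrable_exp_neg_mul_of_lintegral_ne_top hH.aestronglyMeasurable hZ
  rw [← integral_eq_lintegral_of_nonneg_ae (Eventually.of_forall fun _ => (exp_pos _).le)
    hZint.aestronglyMeasurable, ← integral_const_mul]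
  exact integral_le_log_integral_exp (hH.const_mul _) hZint

end PartitionFunction

theorem stmt6_general {X : Type*} [MeasurableSpace X]
    (μ₀ : Measure X) [IsProbabilityMeasure μ₀]
    (H : (N : ℕ) → (Fin N → X) → ℝ)
    (hmeas : ∀ N, Measurable (H N))
    (β₀ : ℝ) (hβ₀ : β₀ < 0)
    (hZfin : ∀ β : ℝ, β₀ ≤ β → ∀ N : ℕ,
      (∫⁻ x, ENNReal.ofReal (Real.exp (-β * H N x)) ∂(Measure.pi fun _ : Fin N => μ₀)) ≠ ⊤)
    (E : ProbabilityMeasure X → EReal)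
    (hEbot : ∀ μ, E μ ≠ ⊥)
    (hEfin : E ⟨μ₀, inferInstance⟩ ≠ ⊤)
    (f : ℝ → ℝ)
    (hf : ∀ β : ℝ, β₀ ≤ β →
      ((f β : ℝ) : EReal)
        = ⨅ μ : ProbabilityMeasure X, ((β : EReal) * E μ + relEntropy μ₀ (μ : Measure X)))
    (hlim : ∀ β : ℝ, β₀ ≤ β →
      Tendsto (fun N : ℕ =>
          -(1 / (N : ℝ)) * Real.log
            ((∫⁻ x, ENNReal.ofReal (Real.exp (-β * H N x))
                ∂(Measure.pi fun _ : Fin N => μ₀)).toReal))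
        atTop (nhds (f β)))
    (hdiff : DifferentiableAt ℝ f 0) :
    ∃ r : ℝ, E ⟨μ₀, inferInstance⟩ = (r : EReal) ∧
      Tendsto (fun N : ℕ =>
          (1 / (N : ℝ)) * ∫ x, H N x ∂(Measure.pi fun _ : Fin N => μ₀))
        atTop (nhds r) := by
  obtain ⟨r, hr⟩ : ∃ r : ℝ, E ⟨μ₀, inferInstance⟩ = r :=
    ⟨_, (EReal.coe_toReal hEfin (hEbot _)).symm⟩
  refine ⟨r, hr, ?_⟩
  have hf_le : ∀ β, β₀ ≤ β → f β ≤ β * r := by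
    intro β hβ
    have h := (hf β hβ).trans_le (iInf_le _ ⟨μ₀, inferInstance⟩)
    rw [ProbabilityMeasure.coe_mk, relEntropy_self, hr, add_zero, ← EReal.coe_mul] at h
    exact_mod_cast h
  have hf0 : f 0 = 0 :=
    tendsto_nhds_unique (hlim 0 hβ₀.le) (by simp)
  have hderiv : HasDerivAt f r 0 := by
    have h := hdiff.hasDerivAt
    rwa [h.eq_of_eventually_le_tangent (r := r) ?_] at h
    filter_upwards [Ioi_mem_nhds hβ₀] with β hβ
    simpa [hf0, mul_comm r] using hf_le β hβ.le
  have hH_int : ∀ N, Integrable (H N) (Measure.pi fun _ : Fin N => μ₀) := fun N => by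
    simpa using ProbabilityTheory.integrable_pow_of_integrable_exp_mul (neg_ne_zero.mpr hβ₀.ne)
      (integrable_exp_neg_mul_of_lintegral_ne_top (hmeas N).aestronglyMeasurable
        (hZfin β₀ le_rfl N))
      (integrable_exp_neg_mul_of_lintegral_ne_top (hmeas N).aestronglyMeasurable
        (hZfin (-β₀) (by linarith) N)) 1
  refine tendsto_of_le_mul_of_hasDerivAt_zero hderiv hf0
    (eventually_of_mem (Ioi_mem_nhds hβ₀) fun β hβ => hlim β (le_of_lt hβ))
    (eventually_of_mem (Ioi_mem_nhds hβ₀) fun β hβ N => ?_)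
  have hJensen := neg_mul_integral_le_log_lintegral_exp (hH_int N) (hZfin β (le_of_lt hβ) N)
  have hN : (0 : ℝ) ≤ 1 / N := by positivity
  linarith [mul_le_mul_of_nonneg_left hJensen hN]

/-- If the partition functions `Z_{N,β} = ∫_{X^N} e^{−βH^{(N)}} dμ₀^{⊗N}` are
finite for all `β ≥ β₀` (with `β₀ < 0`) and satisfy
`lim_N −(1/N) log Z_{N,β} = f(β) := inf_{μ ∈ M₁(X)} (β E(μ) + D_{μ₀}(μ)) > −∞` for all
`β ≥ β₀`, with `E(μ₀)` finite, and if `f` is differentiable at `β = 0`, then the mean energy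
`lim_N (1/N) ∫_{X^N} H^{(N)} dμ₀^{⊗N}` exists and equals `E(μ₀)`. -/
theorem stmt6 {X : Type*} [MetricSpace X] [CompactSpace X] [MeasurableSpace X] [BorelSpace X]
    (μ₀ : Measure X) [IsProbabilityMeasure μ₀]
    (H : (N : ℕ) → (Fin N → X) → ℝ)
    (hsym : ∀ (N : ℕ) (σ : Equiv.Perm (Fin N)) (x : Fin N → X), H N (x ∘ σ) = H N x)
    (hlsc : ∀ N, LowerSemicontinuous (H N))
    (hmeas : ∀ N, Measurable (H N))
    (β₀ : ℝ) (hβ₀ : β₀ < 0)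
    (hZfin : ∀ β : ℝ, β₀ ≤ β → ∀ N : ℕ,
      (∫⁻ x, ENNReal.ofReal (Real.exp (-β * H N x)) ∂(Measure.pi fun _ : Fin N => μ₀)) ≠ ⊤)
    (E : ProbabilityMeasure X → EReal)
    (hEbot : ∀ μ, E μ ≠ ⊥)
    (hEfin : E ⟨μ₀, inferInstance⟩ ≠ ⊤)
    (f : ℝ → ℝ)
    (hf : ∀ β : ℝ, β₀ ≤ β →
      ((f β : ℝ) : EReal)
        = ⨅ μ : ProbabilityMeasure X, ((β : EReal) * E μ + relEntropy μ₀ (μ : Measure X)))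
    (hlim : ∀ β : ℝ, β₀ ≤ β →
      Tendsto (fun N : ℕ =>
          -(1 / (N : ℝ)) * Real.log
            ((∫⁻ x, ENNReal.ofReal (Real.exp (-β * H N x))
                ∂(Measure.pi fun _ : Fin N => μ₀)).toReal))
        atTop (nhds (f β)))
    (hdiff : DifferentiableAt ℝ f 0) :
    ∃ r : ℝ, E ⟨μ₀, inferInstance⟩ = (r : EReal) ∧
      Tendsto (fun N : ℕ =>
          (1 / (N : ℝ)) * ∫ x, H N x ∂(Measure.pi fun _ : Fin N => μ₀))
        atTop (nhds r) :=
  stmt6_general μ₀ H hmeas β₀ hβ₀ hZfin E hEbot hEfin f hf hlim hdiff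
end

section
/- Let f_N : ℝ → ℝ be a sequence of affine functions, f_N(t) = a_N + b_N t, and let f : ℝ → ℝ be concave. Assume that a_N → f(0), that liminf_{N→∞} f_N(t) ≥ f(t) for every t ∈ ℝ, and that f is differentiable at 0. Then b_N → f'(0). -/
/-!
For fixed `t`, the bound `liminf (a_N + b_N t) ≥ f t` together with `a_N → f 0` shows that
eventually `b_N t > f t - f 0 - ε`. Choosing `t > 0` with difference quotient close to `f'(0)`
bounds `b_N` eventually from below, and choosing `t < 0` bounds it from above.
-/

open Filter Topology

lemma eventually_lt_of_coe_le_liminf {α : Type*} {l : Filter α} {u : α → ℝ} {x y : ℝ}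
    (hy : y < x) (hx : (x : EReal) ≤ liminf (fun n => (u n : EReal)) l) :
    ∀ᶠ n in l, y < u n := by
  filter_upwards [eventually_lt_of_lt_liminf ((EReal.coe_lt_coe_iff.2 hy).trans_le hx)]
    with n hn
  exact_mod_cast hn

lemma eventually_lt_mul_of_le_liminf_affine {α : Type*} {l : Filter α} {a b : α → ℝ}
    {A y t z : ℝ} (ha : Tendsto a l (𝓝 A))
    (hy : (y : EReal) ≤ liminf (fun n => ((a n + b n * t : ℝ) : EReal)) l)
    (hz : z < y - A) :
    ∀ᶠ n in l, z < b n * t := by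
  set ε := y - A - z
  have hε : 0 < ε := by linarith
  have ha_lt : ∀ᶠ n in l, a n < A + ε / 2 := ha.eventually (eventually_lt_nhds (by linarith))
  filter_upwards [ha_lt, eventually_lt_of_coe_le_liminf (by linarith : y - ε / 2 < y) hy]
    with n ha_n haff_n
  linarith

lemma HasDerivAt.exists_pos_mul_lt_sub {f : ℝ → ℝ} {c x d : ℝ} (hf : HasDerivAt f c x)
    (hd : d < c) : ∃ t > 0, d * t < f (x + t) - f x := by
  obtain ⟨t, hslope, ht⟩ : ∃ t, d < t⁻¹ • (f (x + t) - f x) ∧ 0 < t :=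
    ((hf.tendsto_slope_zero_right.eventually (lt_mem_nhds hd)).and self_mem_nhdsWithin).exists
  refine ⟨t, ht, ?_⟩
  rwa [smul_eq_mul, lt_inv_mul_iff₀ ht, mul_comm] at hslope

lemma HasDerivAt.exists_neg_mul_lt_sub {f : ℝ → ℝ} {c x d : ℝ} (hf : HasDerivAt f c x)
    (hd : c < d) : ∃ t < 0, d * t < f (x + t) - f x := by
  obtain ⟨t, hslope, ht⟩ : ∃ t, t⁻¹ • (f (x + t) - f x) < d ∧ t < 0 :=
    ((hf.tendsto_slope_zero_left.eventually (gt_mem_nhds hd)).and self_mem_nhdsWithin).exists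
  refine ⟨t, ht, ?_⟩
  rwa [smul_eq_mul, inv_mul_eq_div, div_lt_iff_of_neg ht] at hslope

theorem stmt11_general (a b : ℕ → ℝ) (f : ℝ → ℝ)
    (ha : Tendsto a atTop (nhds (f 0)))
    (hliminf : ∀ t : ℝ,
      ((f t : ℝ) : EReal) ≤ liminf (fun N : ℕ => ((a N + b N * t : ℝ) : EReal)) atTop)
    (c : ℝ) (hderiv : HasDerivAt f c 0) :
    Tendsto b atTop (nhds c) := by
  rw [tendsto_order]
  constructor
  · intro d hd
    obtain ⟨t, ht, hdt⟩ := hderiv.exists_pos_mul_lt_sub hd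
    rw [zero_add] at hdt
    filter_upwards [eventually_lt_mul_of_le_liminf_affine ha (hliminf t) hdt] with N hN
    exact lt_of_mul_lt_mul_right hN ht.le
  · intro d hd
    obtain ⟨t, ht, hdt⟩ := hderiv.exists_neg_mul_lt_sub hd
    rw [zero_add] at hdt
    filter_upwards [eventually_lt_mul_of_le_liminf_affine ha (hliminf t) hdt] with N hN
    exact lt_of_mul_lt_mul_of_nonpos_right hN ht.le

/-- If `f_N(t) = a_N + b_N t` are affine, `f` is concave, `a_N → f(0)`,
`liminf_N f_N(t) ≥ f(t)` for every `t`, and `f` is differentiable at `0` with derivative `c`,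
then `b_N → c = f'(0)`. -/
theorem stmt11 (a b : ℕ → ℝ) (f : ℝ → ℝ)
    (hconc : ConcaveOn ℝ Set.univ f)
    (ha : Tendsto a atTop (nhds (f 0)))
    (hliminf : ∀ t : ℝ,
      ((f t : ℝ) : EReal) ≤ liminf (fun N : ℕ => ((a N + b N * t : ℝ) : EReal)) atTop)
    (c : ℝ) (hderiv : HasDerivAt f c 0) :
    Tendsto b atTop (nhds c) :=
  stmt11_general a b f ha hliminf c hderiv
end
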